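/- arXiv:2406.17964 — 6 statements merged into one kernel-verified Lean document; each statement's English description precedes it below -/
import Mathlib

section
/- Let G = (I⁰, I¹; F; w) be an instance and let α⁰ and α¹ be refinements of the side-0 and side-1 vertex weights respectively such that both are locally maximin and each is the proportional response of the other. Then for every pair of nonnegative weights c = (c⁰, c¹), the vector c•α is an optimal fractional matching for G^(c): its value Σ_{f∈F} (c•α)(f) equals the maximum value over all feasible vectors of G^(c). -/
open Finset

variable {V : Type*} [DecidableEq V]

/-- `(I0, I1; F; w)` is a valid input instance: the vertex sets `I0`, `I1` are disjoint,
every edge has its first endpoint in `I0` and second endpoint in `I1`,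
and vertex weights are positive. -/
def IsInstance (I0 I1 : Finset V) (F : Finset (V × V)) (w : V → ℝ) : Prop :=
  Disjoint I0 I1 ∧ (∀ e ∈ F, e.1 ∈ I0 ∧ e.2 ∈ I1) ∧ (∀ v ∈ I0 ∪ I1, 0 < w v)

/-- Payload received by a side-0 vertex `i` from edge weights `a`
(the sum of `a` over edges incident to `i`). -/
noncomputable def payload0 (F : Finset (V × V)) (a : V × V → ℝ) (i : V) : ℝ :=
  ∑ e ∈ F.filter (fun e => e.1 = i), a e

/-- Payload received by a side-1 vertex `j` from edge weights `a`. -/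
noncomputable def payload1 (F : Finset (V × V)) (a : V × V → ℝ) (j : V) : ℝ :=
  ∑ e ∈ F.filter (fun e => e.2 = j), a e

/-- `a` is a refinement of the side-0 vertex weights. -/
def IsRefinement0 (I0 : Finset V) (F : Finset (V × V)) (w : V → ℝ) (a : V × V → ℝ) : Prop :=
  (∀ e, 0 ≤ a e) ∧ (∀ e, e ∉ F → a e = 0) ∧
    ∀ i ∈ I0, (∃ j, (i, j) ∈ F) → payload0 F a i = w i

/-- `a` is a refinement of the side-1 vertex weights. -/
def IsRefinement1 (I1 : Finset V) (F : Finset (V × V)) (w : V → ℝ) (a : V × V → ℝ) : Prop :=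
  (∀ e, 0 ≤ a e) ∧ (∀ e, e ∉ F → a e = 0) ∧
    ∀ j ∈ I1, (∃ i, (i, j) ∈ F) → payload1 F a j = w j

/-- Payload density at a side-0 vertex. -/
noncomputable def density0 (F : Finset (V × V)) (w : V → ℝ) (a : V × V → ℝ) (i : V) : ℝ :=
  payload0 F a i / w i

/-- Payload density at a side-1 vertex. -/
noncomputable def density1 (F : Finset (V × V)) (w : V → ℝ) (a : V × V → ℝ) (j : V) : ℝ :=
  payload1 F a j / w j

/-- A side-0 refinement is locally maximin: positive weight is sent only to neighbours
of minimum payload density. -/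
def LocallyMaximin0 (F : Finset (V × V)) (w : V → ℝ) (a : V × V → ℝ) : Prop :=
  ∀ e ∈ F, 0 < a e → ∀ k, (e.1, k) ∈ F → density1 F w a e.2 ≤ density1 F w a k

/-- A side-1 refinement is locally maximin. -/
def LocallyMaximin1 (F : Finset (V × V)) (w : V → ℝ) (a : V × V → ℝ) : Prop :=
  ∀ e ∈ F, 0 < a e → ∀ k, (k, e.2) ∈ F → density0 F w a e.1 ≤ density0 F w a k

/-- `b` is the proportional response to the side-0 refinement `a`. -/
def IsPropRespOf0 (F : Finset (V × V)) (w : V → ℝ) (a b : V × V → ℝ) : Prop :=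
  (∀ e, e ∉ F → b e = 0) ∧ ∀ e ∈ F, b e = a e * w e.2 / payload1 F a e.2

/-- `a` is the proportional response to the side-1 refinement `b`. -/
def IsPropRespOf1 (F : Finset (V × V)) (w : V → ℝ) (b a : V × V → ℝ) : Prop :=
  (∀ e, e ∉ F → a e = 0) ∧ ∀ e ∈ F, a e = b e * w e.1 / payload0 F b e.1

/-- Feasible fractional matching for the vertex-constrained instance `G^(c)`. -/
def FeasibleMatching (I0 I1 : Finset V) (F : Finset (V × V)) (w : V → ℝ)
    (c0 c1 : ℝ) (x : V × V → ℝ) : Prop :=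
  (∀ e, 0 ≤ x e) ∧ (∀ e, e ∉ F → x e = 0) ∧
    (∀ i ∈ I0, payload0 F x i ≤ c0 * w i) ∧ (∀ j ∈ I1, payload1 F x j ≤ c1 * w j)

/-- Value of a fractional matching. -/
noncomputable def matchVal (F : Finset (V × V)) (x : V × V → ℝ) : ℝ := ∑ e ∈ F, x e

/-- The fractional matching `c • α` induced by a refinement pair. -/
noncomputable def cdot (c0 c1 : ℝ) (a0 a1 : V × V → ℝ) : V × V → ℝ :=
  fun e => min (c0 * a0 e) (c1 * a1 e)

/-! The fractional matching `c • α` is certified optimal by a 0/1 vertex cover. Writing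
`σ` for the side-0 density of `α¹` and `ρ` for the side-1 density of `α⁰`, mutual proportional
response gives `α¹ = α⁰ σ(i)` and `α⁰ = α¹ ρ(j)` on every edge `ij`, hence `σ(i) ρ(j) = 1` on the
support of `α⁰`; local maximinality of `α⁰` upgrades this to `σ(i) ρ(j) ≥ 1` on all edges. Cover
the side-0 vertices with `c⁰ ≤ c¹ σ(i)` and the side-1 vertices with `c¹ < c⁰ ρ(j)`: every edge is
covered, every edge carrying weight is covered exactly once, and `c • α` saturates every covering
vertex, so its value equals the weight of the cover, an upper bound by weak LP duality. -/

section Payload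

variable {F : Finset (V × V)}

lemma sum_mul_fst_eq_sum_mul_payload0 (g : V × V → ℝ) (Y : V → ℝ) :
    ∑ e ∈ F, g e * Y e.1 = ∑ i ∈ F.image Prod.fst, Y i * payload0 F g i := by
  rw [← Finset.sum_fiberwise_of_maps_to fun e he => mem_image_of_mem Prod.fst he]
  refine sum_congr rfl fun i _ => ?_
  rw [payload0, mul_sum]
  exact sum_congr rfl fun e he => by rw [(mem_filter.1 he).2, mul_comm]

lemma sum_mul_snd_eq_sum_mul_payload1 (g : V × V → ℝ) (Z : V → ℝ) :
    ∑ e ∈ F, g e * Z e.2 = ∑ j ∈ F.image Prod.snd, Z j * payload1 F g j := by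
  rw [← Finset.sum_fiberwise_of_maps_to fun e he => mem_image_of_mem Prod.snd he]
  refine sum_congr rfl fun j _ => ?_
  rw [payload1, mul_sum]
  exact sum_congr rfl fun e he => by rw [(mem_filter.1 he).2, mul_comm]

lemma payload0_const_mul (c : ℝ) (a : V × V → ℝ) (i : V) :
    payload0 F (fun e => c * a e) i = c * payload0 F a i :=
  (mul_sum _ _ _).symm

lemma payload1_const_mul (c : ℝ) (a : V × V → ℝ) (j : V) :
    payload1 F (fun e => c * a e) j = c * payload1 F a j :=
  (mul_sum _ _ _).symm

lemma payload0_eq_zero_of_forall_not_mem {i : V} (a : V × V → ℝ) (h : ¬∃ j, (i, j) ∈ F) :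
    payload0 F a i = 0 :=
  sum_eq_zero fun e he => absurd ⟨e.2, (mem_filter.1 he).2 ▸ (mem_filter.1 he).1⟩ h

lemma payload1_eq_zero_of_forall_not_mem {j : V} (a : V × V → ℝ) (h : ¬∃ i, (i, j) ∈ F) :
    payload1 F a j = 0 :=
  sum_eq_zero fun e he => absurd ⟨e.1, (mem_filter.1 he).2 ▸ (mem_filter.1 he).1⟩ h

end Payload

section Matching

variable {I0 I1 : Finset V} {F : Finset (V × V)} {w : V → ℝ} {a0 a1 : V × V → ℝ} {c0 c1 : ℝ}

lemma IsRefinement0.payload0_le {i : V} (ha : IsRefinement0 I0 F w a0) (hi : i ∈ I0)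
    (hw : 0 ≤ w i) : payload0 F a0 i ≤ w i := by
  by_cases h : ∃ j, (i, j) ∈ F
  · exact (ha.2.2 i hi h).le
  · rwa [payload0_eq_zero_of_forall_not_mem a0 h]

lemma IsRefinement1.payload1_le {j : V} (ha : IsRefinement1 I1 F w a1) (hj : j ∈ I1)
    (hw : 0 ≤ w j) : payload1 F a1 j ≤ w j := by
  by_cases h : ∃ i, (i, j) ∈ F
  · exact (ha.2.2 j hj h).le
  · rwa [payload1_eq_zero_of_forall_not_mem a1 h]

lemma feasibleMatching_cdot (hw : ∀ v ∈ I0 ∪ I1, 0 ≤ w v) (ha0 : IsRefinement0 I0 F w a0)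
    (ha1 : IsRefinement1 I1 F w a1) (hc0 : 0 ≤ c0) (hc1 : 0 ≤ c1) :
    FeasibleMatching I0 I1 F w c0 c1 (cdot c0 c1 a0 a1) := by
  refine ⟨fun e => le_min (mul_nonneg hc0 (ha0.1 e)) (mul_nonneg hc1 (ha1.1 e)),
    fun e he => by simp [cdot, ha0.2.1 e he, ha1.2.1 e he], fun i hi => ?_, fun j hj => ?_⟩
  · calc payload0 F (cdot c0 c1 a0 a1) i ≤ payload0 F (fun e => c0 * a0 e) i :=
          sum_le_sum fun e _ => min_le_left _ _
      _ = c0 * payload0 F a0 i := payload0_const_mul c0 a0 i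
      _ ≤ c0 * w i := mul_le_mul_of_nonneg_left
          (ha0.payload0_le hi (hw i (mem_union_left _ hi))) hc0
  · calc payload1 F (cdot c0 c1 a0 a1) j ≤ payload1 F (fun e => c1 * a1 e) j :=
          sum_le_sum fun e _ => min_le_right _ _
      _ = c1 * payload1 F a1 j := payload1_const_mul c1 a1 j
      _ ≤ c1 * w j := mul_le_mul_of_nonneg_left
          (ha1.payload1_le hj (hw j (mem_union_right _ hj))) hc1

lemma matchVal_le_of_cover {x : V × V → ℝ} {Y Z : V → ℝ}
    (hF : ∀ e ∈ F, e.1 ∈ I0 ∧ e.2 ∈ I1) (hx : FeasibleMatching I0 I1 F w c0 c1 x)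
    (hY : ∀ i, 0 ≤ Y i) (hZ : ∀ j, 0 ≤ Z j) (hcover : ∀ e ∈ F, 1 ≤ Y e.1 + Z e.2) :
    matchVal F x ≤ ∑ i ∈ F.image Prod.fst, Y i * (c0 * w i) +
      ∑ j ∈ F.image Prod.snd, Z j * (c1 * w j) := by
  obtain ⟨hx0, -, hx1, hx2⟩ := hx
  calc matchVal F x ≤ ∑ e ∈ F, x e * (Y e.1 + Z e.2) :=
        sum_le_sum fun e he => le_mul_of_one_le_right (hx0 e) (hcover e he)
    _ = ∑ i ∈ F.image Prod.fst, Y i * payload0 F x i +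
          ∑ j ∈ F.image Prod.snd, Z j * payload1 F x j := by
        simp only [mul_add, sum_add_distrib, sum_mul_fst_eq_sum_mul_payload0,
          sum_mul_snd_eq_sum_mul_payload1]
    _ ≤ _ := by
        gcongr with i hi j hj
        · exact hY i
        · obtain ⟨e, he, rfl⟩ := mem_image.1 hi
          exact hx1 _ (hF e he).1
        · exact hZ j
        · obtain ⟨e, he, rfl⟩ := mem_image.1 hj
          exact hx2 _ (hF e he).2

lemma matchVal_eq_of_complementarySlackness {y : V × V → ℝ} {Y Z : V → ℝ}
    (hslack : ∀ e ∈ F, y e * (Y e.1 + Z e.2) = y e)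
    (htight0 : ∀ i ∈ F.image Prod.fst, Y i * payload0 F y i = Y i * (c0 * w i))
    (htight1 : ∀ j ∈ F.image Prod.snd, Z j * payload1 F y j = Z j * (c1 * w j)) :
    matchVal F y = ∑ i ∈ F.image Prod.fst, Y i * (c0 * w i) +
      ∑ j ∈ F.image Prod.snd, Z j * (c1 * w j) := by
  rw [← sum_congr rfl htight0, ← sum_congr rfl htight1, ← sum_mul_fst_eq_sum_mul_payload0,
    ← sum_mul_snd_eq_sum_mul_payload1, ← sum_add_distrib, matchVal]
  exact (sum_congr rfl fun e he => by rw [← mul_add, hslack e he]).symm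

end Matching

lemma mul_eq_one_of_eq_mul_of_eq_mul {a b s r : ℝ} (ha : a ≠ 0) (hb : b = a * s)
    (ha' : a = b * r) : s * r = 1 :=
  mul_left_cancel₀ ha (by rw [mul_one, ← mul_assoc, ← hb, ← ha'])

lemma le_mul_or_lt_mul_of_one_le_mul {c0 c1 s r : ℝ} (hc1 : 0 ≤ c1) (hr : 0 < r)
    (hsr : 1 ≤ s * r) : c0 ≤ c1 * s ∨ c1 < c0 * r := by
  refine or_iff_not_imp_left.2 fun h => ?_
  calc c1 ≤ c1 * s * r := by rw [mul_assoc]; exact le_mul_of_one_le_right hc1 hsr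
    _ < c0 * r := mul_lt_mul_of_pos_right (not_le.1 h) hr

lemma le_mul_iff_not_lt_mul_of_mul_eq_one {c0 c1 s r : ℝ} (hr : 0 < r) (hsr : s * r = 1) :
    c0 ≤ c1 * s ↔ ¬c1 < c0 * r := by
  rw [not_lt, ← mul_le_mul_iff_of_pos_right hr, mul_assoc, hsr, mul_one]

section RefinementPair

variable {I0 I1 : Finset V} {F : Finset (V × V)} {w : V → ℝ} {a0 a1 : V × V → ℝ}
  {e : V × V}

lemma IsPropRespOf0.eq_mul_density1 (hpr : IsPropRespOf0 F w a0 a1) (he : e ∈ F)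
    (hp : payload1 F a0 e.2 ≠ 0) (hw : w e.2 ≠ 0) : a0 e = a1 e * density1 F w a0 e.2 := by
  rw [hpr.2 e he, density1]
  field_simp

lemma IsPropRespOf1.eq_mul_density0 (hpr : IsPropRespOf1 F w a1 a0) (he : e ∈ F)
    (hp : payload0 F a1 e.1 ≠ 0) (hw : w e.1 ≠ 0) : a1 e = a0 e * density0 F w a1 e.1 := by
  rw [hpr.2 e he, density0]
  field_simp

/- A vertex receiving no payload would make the proportional response divide by zero, which
Lean evaluates to `0`; the response would then not refine the positive weight there. -/
lemma IsPropRespOf0.payload1_pos (hpr : IsPropRespOf0 F w a0 a1) (ha0 : ∀ e, 0 ≤ a0 e)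
    (ha1 : IsRefinement1 I1 F w a1) (he : e ∈ F) (hj : e.2 ∈ I1) (hw : 0 < w e.2) :
    0 < payload1 F a0 e.2 := by
  refine (sum_nonneg fun f _ => ha0 f).lt_of_ne fun h0 : 0 = payload1 F a0 e.2 => hw.ne ?_
  rw [← ha1.2.2 _ hj ⟨e.1, he⟩]
  refine (sum_eq_zero fun f hf => ?_).symm
  rw [hpr.2 f (mem_filter.1 hf).1, (mem_filter.1 hf).2, ← h0, div_zero]

lemma IsPropRespOf1.payload0_pos (hpr : IsPropRespOf1 F w a1 a0) (ha1 : ∀ e, 0 ≤ a1 e)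
    (ha0 : IsRefinement0 I0 F w a0) (he : e ∈ F) (hi : e.1 ∈ I0) (hw : 0 < w e.1) :
    0 < payload0 F a1 e.1 := by
  refine (sum_nonneg fun f _ => ha1 f).lt_of_ne fun h0 : 0 = payload0 F a1 e.1 => hw.ne ?_
  rw [← ha0.2.2 _ hi ⟨e.2, he⟩]
  refine (sum_eq_zero fun f hf => ?_).symm
  rw [hpr.2 f (mem_filter.1 hf).1, (mem_filter.1 hf).2, ← h0, div_zero]

lemma LocallyMaximin0.one_le_mul_density1 {σ : V → ℝ} (hm : LocallyMaximin0 F w a0)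
    (ha0 : IsRefinement0 I0 F w a0) (hσ : ∀ e ∈ F, a1 e = a0 e * σ e.1)
    (hρ : ∀ e ∈ F, a0 e = a1 e * density1 F w a0 e.2) (he : e ∈ F) (hi : e.1 ∈ I0)
    (hw : 0 < w e.1) (hσ0 : 0 ≤ σ e.1) : 1 ≤ σ e.1 * density1 F w a0 e.2 := by
  have hpos : ∑ f ∈ F.filter (fun f => f.1 = e.1), (0 : ℝ) < payload0 F a0 e.1 := by
    rwa [sum_const_zero, ha0.2.2 _ hi ⟨e.2, he⟩]
  obtain ⟨f, hf, hf0⟩ := exists_lt_of_sum_lt hpos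
  obtain ⟨hfF, hf1⟩ := mem_filter.1 hf
  have hfe : (f.1, e.2) ∈ F := by rw [hf1]; exact he
  calc 1 = σ f.1 * density1 F w a0 f.2 :=
        (mul_eq_one_of_eq_mul_of_eq_mul hf0.ne' (hσ f hfF) (hρ f hfF)).symm
    _ ≤ σ e.1 * density1 F w a0 e.2 := by
        rw [hf1]
        exact mul_le_mul_of_nonneg_left (hm f hfF hf0 e.2 hfe) hσ0

end RefinementPair

section Optimality

variable {I0 I1 : Finset V} {F : Finset (V × V)} {w : V → ℝ} {a0 a1 : V × V → ℝ}
  {σ ρ : V → ℝ} {c0 c1 : ℝ}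

lemma payload0_cdot_eq_of_le_mul {i : V} (ha0 : IsRefinement0 I0 F w a0)
    (hσ : ∀ e ∈ F, a1 e = a0 e * σ e.1) (hi : i ∈ I0) (hadj : ∃ j, (i, j) ∈ F)
    (hc : c0 ≤ c1 * σ i) : payload0 F (cdot c0 c1 a0 a1) i = c0 * w i := by
  rw [← ha0.2.2 i hi hadj, ← payload0_const_mul]
  refine sum_congr rfl fun e he => min_eq_left ?_
  obtain ⟨heF, rfl⟩ := mem_filter.1 he
  rw [hσ e heF]
  nlinarith [ha0.1 e]

lemma payload1_cdot_eq_of_lt_mul {j : V} (ha1 : IsRefinement1 I1 F w a1)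
    (hρ : ∀ e ∈ F, a0 e = a1 e * ρ e.2) (hj : j ∈ I1) (hadj : ∃ i, (i, j) ∈ F)
    (hc : c1 < c0 * ρ j) : payload1 F (cdot c0 c1 a0 a1) j = c1 * w j := by
  rw [← ha1.2.2 j hj hadj, ← payload1_const_mul]
  refine sum_congr rfl fun e he => min_eq_right ?_
  obtain ⟨heF, rfl⟩ := mem_filter.1 he
  rw [hρ e heF]
  nlinarith [ha1.1 e]

theorem matchVal_le_matchVal_cdot {x : V × V → ℝ} (hF : ∀ e ∈ F, e.1 ∈ I0 ∧ e.2 ∈ I1)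
    (ha0 : IsRefinement0 I0 F w a0) (ha1 : IsRefinement1 I1 F w a1)
    (hσ : ∀ e ∈ F, a1 e = a0 e * σ e.1) (hρ : ∀ e ∈ F, a0 e = a1 e * ρ e.2)
    (hρpos : ∀ e ∈ F, 0 < ρ e.2) (hσρ : ∀ e ∈ F, 1 ≤ σ e.1 * ρ e.2)
    (hc1 : 0 ≤ c1) (hx : FeasibleMatching I0 I1 F w c0 c1 x) :
    matchVal F x ≤ matchVal F (cdot c0 c1 a0 a1) := by
  set Y : V → ℝ := fun i => if c0 ≤ c1 * σ i then 1 else 0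
  set Z : V → ℝ := fun j => if c1 < c0 * ρ j then 1 else 0
  have hcover : ∀ e ∈ F, 1 ≤ Y e.1 + Z e.2 := fun e he => by
    rcases le_mul_or_lt_mul_of_one_le_mul (c0 := c0) hc1 (hρpos e he) (hσρ e he) with h | h <;>
      simp only [Y, Z] <;> split_ifs <;> norm_num
  have hslack : ∀ e ∈ F, cdot c0 c1 a0 a1 e * (Y e.1 + Z e.2) = cdot c0 c1 a0 a1 e := by
    intro e he
    by_cases hpos : 0 < a0 e
    · have hiff := le_mul_iff_not_lt_mul_of_mul_eq_one (c0 := c0) (c1 := c1) (hρpos e he)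
        (mul_eq_one_of_eq_mul_of_eq_mul hpos.ne' (hσ e he) (hρ e he))
      by_cases h : c0 ≤ c1 * σ e.1
      · simp [Y, Z, h, hiff.1 h]
      · simp [Y, Z, h, not_not.1 (mt hiff.2 h)]
    · have : cdot c0 c1 a0 a1 e = 0 := by
        simp [cdot, le_antisymm (not_lt.1 hpos) (ha0.1 e), mul_nonneg hc1 (ha1.1 e)]
      rw [this, zero_mul]
  have htight0 : ∀ i ∈ F.image Prod.fst,
      Y i * payload0 F (cdot c0 c1 a0 a1) i = Y i * (c0 * w i) := by
    intro i hi
    obtain ⟨e, he, rfl⟩ := mem_image.1 hi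
    by_cases h : c0 ≤ c1 * σ e.1
    · rw [payload0_cdot_eq_of_le_mul ha0 hσ (hF e he).1 ⟨e.2, he⟩ h]
    · simp [Y, h]
  have htight1 : ∀ j ∈ F.image Prod.snd,
      Z j * payload1 F (cdot c0 c1 a0 a1) j = Z j * (c1 * w j) := by
    intro j hj
    obtain ⟨e, he, rfl⟩ := mem_image.1 hj
    by_cases h : c1 < c0 * ρ e.2
    · rw [payload1_cdot_eq_of_lt_mul ha1 hρ (hF e he).2 ⟨e.1, he⟩ h]
    · simp [Z, h]
  rw [matchVal_eq_of_complementarySlackness hslack htight0 htight1]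
  exact matchVal_le_of_cover hF hx (fun i => by simp only [Y]; split_ifs <;> norm_num)
    (fun j => by simp only [Z]; split_ifs <;> norm_num) hcover

end Optimality

theorem locally_maximin_pair_universal_for_matching_general
    (I0 I1 : Finset V) (F : Finset (V × V)) (w : V → ℝ)
    (hG : IsInstance I0 I1 F w)
    (a0 a1 : V × V → ℝ)
    (ha0 : IsRefinement0 I0 F w a0) (ha1 : IsRefinement1 I1 F w a1)
    (hm0 : LocallyMaximin0 F w a0)
    (hpr0 : IsPropRespOf0 F w a0 a1) (hpr1 : IsPropRespOf1 F w a1 a0)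
    (c0 c1 : ℝ) (hc0 : 0 ≤ c0) (hc1 : 0 ≤ c1) :
    FeasibleMatching I0 I1 F w c0 c1 (cdot c0 c1 a0 a1) ∧
      ∀ x, FeasibleMatching I0 I1 F w c0 c1 x →
        matchVal F x ≤ matchVal F (cdot c0 c1 a0 a1) := by
  obtain ⟨-, hF, hw⟩ := hG
  have hw0 : ∀ e ∈ F, 0 < w e.1 := fun e he => hw _ (mem_union_left _ (hF e he).1)
  have hw1 : ∀ e ∈ F, 0 < w e.2 := fun e he => hw _ (mem_union_right _ (hF e he).2)
  have hp0 : ∀ e ∈ F, 0 < payload0 F a1 e.1 := fun e he =>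
    hpr1.payload0_pos ha1.1 ha0 he (hF e he).1 (hw0 e he)
  have hp1 : ∀ e ∈ F, 0 < payload1 F a0 e.2 := fun e he =>
    hpr0.payload1_pos ha0.1 ha1 he (hF e he).2 (hw1 e he)
  have hσ : ∀ e ∈ F, a1 e = a0 e * density0 F w a1 e.1 := fun e he =>
    hpr1.eq_mul_density0 he (hp0 e he).ne' (hw0 e he).ne'
  have hρ : ∀ e ∈ F, a0 e = a1 e * density1 F w a0 e.2 := fun e he =>
    hpr0.eq_mul_density1 he (hp1 e he).ne' (hw1 e he).ne'
  have hσρ : ∀ e ∈ F, 1 ≤ density0 F w a1 e.1 * density1 F w a0 e.2 := fun e he =>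
    hm0.one_le_mul_density1 ha0 hσ hρ he (hF e he).1 (hw0 e he)
      (div_pos (hp0 e he) (hw0 e he)).le
  exact ⟨feasibleMatching_cdot (fun v hv => (hw v hv).le) ha0 ha1 hc0 hc1, fun x hx =>
    matchVal_le_matchVal_cdot hF ha0 ha1 hσ hρ (fun e he => div_pos (hp1 e he) (hw1 e he))
      hσρ hc1 hx⟩

/-- **Universal refinement pair for matching.**
If the refinement pair `(a0, a1)` is locally maximin on both sides and the two refinements
are proportional responses to each other, then for every pair of nonnegative weights
`c = (c0, c1)` the induced fractional matching `c • α` is an optimal fractional matching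
for `G^(c)`: it is feasible and its value is the maximum value over all feasible vectors. -/
theorem locally_maximin_pair_universal_for_matching
    (I0 I1 : Finset V) (F : Finset (V × V)) (w : V → ℝ)
    (hG : IsInstance I0 I1 F w)
    (a0 a1 : V × V → ℝ)
    (ha0 : IsRefinement0 I0 F w a0) (ha1 : IsRefinement1 I1 F w a1)
    (hm0 : LocallyMaximin0 F w a0) (hm1 : LocallyMaximin1 F w a1)
    (hpr0 : IsPropRespOf0 F w a0 a1) (hpr1 : IsPropRespOf1 F w a1 a0)
    (c0 c1 : ℝ) (hc0 : 0 ≤ c0) (hc1 : 0 ≤ c1) :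
    FeasibleMatching I0 I1 F w c0 c1 (cdot c0 c1 a0 a1) ∧
      ∀ x, FeasibleMatching I0 I1 F w c0 c1 x →
        matchVal F x ≤ matchVal F (cdot c0 c1 a0 a1) :=
  locally_maximin_pair_universal_for_matching_general I0 I1 F w hG a0 a1 ha0 ha1 hm0 hpr0 hpr1 c0 c1
    hc0 hc1
end

section
/- Let G = (I⁰, I¹; F; w) be an instance and let (α⁰, α¹) be a refinement pair that is locally maximin on both sides and mutually proportional responses. Fix a side ι ∈ {0,1} and let p* and ρ* be the payload and payload-density vectors on side ι induced by the refinement α^ι̅. Then for every pair of nonnegative weights c = (c^ι, c^ι̅), the maximum value of a fractional matching in G^(c) equals Σ_{j∈I^ι} min{c^ι/ρ*(j), c^ι̅}·p*(j), with the convention x/0 = +∞ for x > 0 and 0·(+∞) interpreted via min{+∞, c^ι̅} = c^ι̅. -/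
open Finset

variable {V : Type*} [DecidableEq V]

/-! The proportional-response matching `e ↦ min (c^ι̅ α^ι̅(e), c^ι α^ι(e))` is feasible and loads
each `j ∈ I^ι` with exactly `min (c^ι̅ p*(j), c^ι w(j))`. Conversely, let `S` be the vertices of
`I^ι` with `c^ι̅ p*(j) < c^ι w(j)`, i.e. of payload density below `c^ι / c^ι̅`, and `T` their
neighbours. By local maximinality the whole weight of `T` is sent into `S`, so `w(T) ≤ p*(S)`, and
`T ∪ (I^ι ∖ S)` is a vertex cover of capacity at most `c^ι̅ p*(S) + c^ι w(I^ι ∖ S)`, which is the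
claimed value. -/

section EndpointMaps

/- Edges are taken in an arbitrary type `E`, with the side of the refinement and the other side
given by endpoint maps `s t : E → V`; `(Prod.fst, Prod.snd)` and `(Prod.snd, Prod.fst)` are the
two choices of `ι` in the theorem. -/
variable {E : Type*}

noncomputable def payload (F : Finset E) (π : E → V) (a : E → ℝ) (v : V) : ℝ :=
  ∑ e ∈ F with π e = v, a e

noncomputable def density (F : Finset E) (π : E → V) (w : V → ℝ) (a : E → ℝ) (v : V) : ℝ :=
  payload F π a v / w v

structure IsRefinementAlong (F : Finset E) (s : E → V) (A : Finset V) (w : V → ℝ)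
    (a : E → ℝ) : Prop where
  nonneg : ∀ e, 0 ≤ a e
  eq_zero_of_notMem : ∀ e ∉ F, a e = 0
  payload_eq : ∀ i ∈ A, (∃ e ∈ F, s e = i) → payload F s a i = w i

def IsLocallyMaximinAlong (F : Finset E) (s t : E → V) (w : V → ℝ) (a : E → ℝ) : Prop :=
  ∀ e ∈ F, 0 < a e → ∀ e' ∈ F, s e' = s e → density F t w a (t e) ≤ density F t w a (t e')

def IsFeasibleAlong (F : Finset E) (s t : E → V) (A B : Finset V) (w : V → ℝ) (cs ct : ℝ)
    (x : E → ℝ) : Prop :=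
  (∀ e, 0 ≤ x e) ∧ (∀ e, e ∉ F → x e = 0) ∧
    (∀ i ∈ A, payload F s x i ≤ cs * w i) ∧ (∀ j ∈ B, payload F t x j ≤ ct * w j)

variable {F : Finset E} {s t π : E → V} {A B T U : Finset V} {w : V → ℝ} {a b x : E → ℝ}
  {cs ct : ℝ}

theorem sum_payload_eq_sum_filter (F : Finset E) (π : E → V) (a : E → ℝ) (T : Finset V) :
    ∑ v ∈ T, payload F π a v = ∑ e ∈ F with π e ∈ T, a e :=
  Finset.sum_fiberwise_eq_sum_filter F T π a

theorem sum_eq_sum_payload (hπ : ∀ e ∈ F, π e ∈ T) (a : E → ℝ) :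
    ∑ e ∈ F, a e = ∑ v ∈ T, payload F π a v :=
  (Finset.sum_fiberwise_of_maps_to hπ a).symm

theorem payload_mono (h : ∀ e ∈ F, a e ≤ b e) (v : V) : payload F π a v ≤ payload F π b v :=
  Finset.sum_le_sum fun e he => h e (mem_filter.1 he).1

theorem payload_const_mul (c : ℝ) (a : E → ℝ) (v : V) :
    payload F π (fun e => c * a e) v = c * payload F π a v :=
  (Finset.mul_sum _ _ _).symm

theorem payload_nonneg (ha : ∀ e ∈ F, 0 ≤ a e) {v : V} : 0 ≤ payload F π a v :=
  Finset.sum_nonneg fun e he => ha e (mem_filter.1 he).1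

theorem IsRefinementAlong.payload_le (ha : IsRefinementAlong F s A w a) {i : V} (hi : i ∈ A)
    (hwi : 0 ≤ w i) : payload F s a i ≤ w i := by
  by_cases hdeg : ∃ e ∈ F, s e = i
  · exact (ha.payload_eq i hi hdeg).le
  · rwa [show payload F s a i = 0 from
      Finset.sum_eq_zero fun e he => absurd ⟨e, mem_filter.1 he⟩ hdeg]

theorem sum_le_sum_payload_add_sum_payload_of_cover (hx : ∀ e ∈ F, 0 ≤ x e)
    (hcover : ∀ e ∈ F, s e ∈ T ∨ t e ∈ U) :
    ∑ e ∈ F, x e ≤ ∑ i ∈ T, payload F s x i + ∑ j ∈ U, payload F t x j := by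
  rw [sum_payload_eq_sum_filter, sum_payload_eq_sum_filter, sum_filter, sum_filter,
    ← sum_add_distrib]
  refine sum_le_sum fun e he => ?_
  have := hx e he
  rcases hcover e he with h | h <;> simp only [h, if_true] <;> split_ifs <;> linarith

theorem sum_payload_le_sum_payload_of_pos (ha : ∀ e ∈ F, 0 ≤ a e) {S : Finset V}
    (h : ∀ e ∈ F, s e ∈ T → 0 < a e → t e ∈ S) :
    ∑ i ∈ T, payload F s a i ≤ ∑ j ∈ S, payload F t a j := by
  rw [sum_payload_eq_sum_filter, sum_payload_eq_sum_filter, sum_filter, sum_filter]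
  refine sum_le_sum fun e he => ?_
  split_ifs with hT hS
  · exact le_rfl
  · exact not_lt.1 fun hpos => hS (h e he hT hpos)
  · exact ha e he
  · exact le_rfl

theorem IsRefinementAlong.sum_image_le_sum_payload (ha : IsRefinementAlong F s A w a)
    (hA : ∀ e ∈ F, s e ∈ A) {S : Finset V}
    (hS : ∀ e ∈ F, ∀ e' ∈ F, s e' = s e → 0 < a e → t e' ∈ S → t e ∈ S) :
    ∑ i ∈ (F.filter (t · ∈ S)).image s, w i ≤ ∑ j ∈ S, payload F t a j := by
  calc ∑ i ∈ (F.filter (t · ∈ S)).image s, w i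
      = ∑ i ∈ (F.filter (t · ∈ S)).image s, payload F s a i := by
        refine sum_congr rfl fun i hi => ?_
        obtain ⟨e, he, rfl⟩ := mem_image.1 hi
        exact (ha.payload_eq _ (hA e (mem_filter.1 he).1) ⟨e, (mem_filter.1 he).1, rfl⟩).symm
    _ ≤ ∑ j ∈ S, payload F t a j := by
        refine sum_payload_le_sum_payload_of_pos (fun e _ => ha.nonneg e) fun e he heT hpos => ?_
        obtain ⟨e', he', hs⟩ := mem_image.1 heT
        exact hS e he e' (mem_filter.1 he').1 hs hpos (mem_filter.1 he').2

theorem mul_lt_mul_of_div_le_div {p q v v' c d : ℝ} (hv : 0 < v) (hv' : 0 < v') (hc : 0 ≤ c)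
    (hpq : p / v ≤ q / v') (hq : c * q < d * v') : c * p < d * v := by
  rw [div_le_div_iff₀ hv hv'] at hpq
  nlinarith [mul_le_mul_of_nonneg_left hpq hc]

theorem min_div_mul_self {p q c d : ℝ} (hp : 0 ≤ p) (hq : 0 ≤ d * q) :
    min (d * q / p) c * p = min (c * p) (d * q) := by
  rcases hp.eq_or_lt with rfl | hp
  · simp [hq]
  · rw [min_mul_of_nonneg _ _ hp.le, div_mul_cancel₀ _ hp.ne', min_comm]

theorem sum_le_sum_min_of_isLocallyMaximinAlong (hF : ∀ e ∈ F, s e ∈ A ∧ t e ∈ B)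
    (hw : ∀ j ∈ B, 0 < w j) (ha : IsRefinementAlong F s A w a)
    (hm : IsLocallyMaximinAlong F s t w a) (hcs : 0 ≤ cs)
    (hx : IsFeasibleAlong F s t A B w cs ct x) :
    ∑ e ∈ F, x e ≤ ∑ j ∈ B, min (cs * payload F t a j) (ct * w j) := by
  obtain ⟨hx0, -, hxA, hxB⟩ := hx
  set S := B.filter fun j => cs * payload F t a j < ct * w j
  set U := B.filter fun j => ¬ cs * payload F t a j < ct * w j
  set T := (F.filter fun e => t e ∈ S).image s
  have hTA : T ⊆ A := by
    simp only [T, image_subset_iff, mem_filter]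
    exact fun e he => (hF e he.1).1
  have hcover : ∀ e ∈ F, s e ∈ T ∨ t e ∈ U := by
    intro e he
    by_cases hS : t e ∈ S
    · exact .inl (mem_image_of_mem s (mem_filter.2 ⟨he, hS⟩))
    · exact .inr (mem_filter.2 ⟨(hF e he).2, fun h => hS (mem_filter.2 ⟨(hF e he).2, h⟩)⟩)
  have hS : ∀ e ∈ F, ∀ e' ∈ F, s e' = s e → 0 < a e → t e' ∈ S → t e ∈ S := by
    intro e he e' he' hs hpos he'S
    obtain ⟨hte', hlt⟩ := mem_filter.1 he'S
    have hte := (hF e he).2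
    exact mem_filter.2 ⟨hte, mul_lt_mul_of_div_le_div (hw _ hte) (hw _ hte') hcs
      (hm e he hpos e' he' hs) hlt⟩
  calc ∑ e ∈ F, x e
      ≤ ∑ i ∈ T, payload F s x i + ∑ j ∈ U, payload F t x j :=
        sum_le_sum_payload_add_sum_payload_of_cover (fun e _ => hx0 e) hcover
    _ ≤ cs * ∑ i ∈ T, w i + ∑ j ∈ U, ct * w j := by
        rw [mul_sum]
        gcongr with i hi j hj
        · exact hxA i (hTA hi)
        · exact hxB j (mem_filter.1 hj).1
    _ ≤ cs * ∑ j ∈ S, payload F t a j + ∑ j ∈ U, ct * w j := by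
        gcongr
        exact ha.sum_image_le_sum_payload (fun e he => (hF e he).1) hS
    _ = ∑ j ∈ B, min (cs * payload F t a j) (ct * w j) := by
        rw [mul_sum, ← sum_filter_add_sum_filter_not B (fun j => cs * payload F t a j < ct * w j)]
        congr 1 <;> refine sum_congr rfl fun j hj => ?_
        · exact (min_eq_left (mem_filter.1 hj).2.le).symm
        · exact (min_eq_right (not_lt.1 (mem_filter.1 hj).2)).symm

theorem payload_min_of_propResp (ha : ∀ e ∈ F, 0 ≤ a e)
    (hb : ∀ e ∈ F, b e = a e * w (t e) / payload F t a (t e)) {j : V} (hj : 0 ≤ ct * w j) :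
    payload F t (fun e => min (cs * a e) (ct * b e)) j = min (cs * payload F t a j) (ct * w j) := by
  have hterm : ∀ e ∈ F.filter (t · = j),
      min (cs * a e) (ct * b e) = min (ct * w j / payload F t a j) cs * a e := by
    intro e he
    obtain ⟨heF, rfl⟩ := mem_filter.1 he
    rw [hb e heF, min_comm, min_mul_of_nonneg _ _ (ha e heF)]
    ring_nf
  rw [payload, sum_congr rfl hterm, ← mul_sum]
  exact min_div_mul_self (payload_nonneg ha) hj

theorem isFeasibleAlong_min (hw : ∀ v ∈ A ∪ B, 0 < w v) (ha : IsRefinementAlong F s A w a)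
    (hb : IsRefinementAlong F t B w b) (hcs : 0 ≤ cs) (hct : 0 ≤ ct) :
    IsFeasibleAlong F s t A B w cs ct fun e => min (cs * a e) (ct * b e) := by
  refine ⟨fun e => le_min (mul_nonneg hcs (ha.nonneg e)) (mul_nonneg hct (hb.nonneg e)),
    fun e he => by simp [ha.eq_zero_of_notMem e he, hb.eq_zero_of_notMem e he], ?_, ?_⟩
  · intro i hi
    calc payload F s (fun e => min (cs * a e) (ct * b e)) i
        ≤ payload F s (fun e => cs * a e) i := payload_mono (fun e _ => min_le_left _ _) i
      _ ≤ cs * w i := by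
        rw [payload_const_mul]
        exact mul_le_mul_of_nonneg_left (ha.payload_le hi (hw i (mem_union_left B hi)).le) hcs
  · intro j hj
    calc payload F t (fun e => min (cs * a e) (ct * b e)) j
        ≤ payload F t (fun e => ct * b e) j := payload_mono (fun e _ => min_le_right _ _) j
      _ ≤ ct * w j := by
        rw [payload_const_mul]
        exact mul_le_mul_of_nonneg_left (hb.payload_le hj (hw j (mem_union_right A hj)).le) hct

theorem isGreatest_sum_min_div_density_mul_payload (hF : ∀ e ∈ F, s e ∈ A ∧ t e ∈ B)
    (hw : ∀ v ∈ A ∪ B, 0 < w v) (ha : IsRefinementAlong F s A w a)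
    (hb : IsRefinementAlong F t B w b) (hm : IsLocallyMaximinAlong F s t w a)
    (hpr : ∀ e ∈ F, b e = a e * w (t e) / payload F t a (t e)) (hcs : 0 ≤ cs) (hct : 0 ≤ ct) :
    IsGreatest {v | ∃ x, IsFeasibleAlong F s t A B w cs ct x ∧ ∑ e ∈ F, x e = v}
      (∑ j ∈ B, min (ct / density F t w a j) cs * payload F t a j) := by
  have hwB : ∀ j ∈ B, 0 < w j := fun j hj => hw j (mem_union_right A hj)
  have hctw : ∀ j ∈ B, 0 ≤ ct * w j := fun j hj => mul_nonneg hct (hwB j hj).le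
  rw [sum_congr rfl fun j hj => by
    rw [density, div_div_eq_mul_div, min_div_mul_self (payload_nonneg fun e _ => ha.nonneg e)
      (hctw j hj)]]
  refine ⟨⟨_, isFeasibleAlong_min hw ha hb hcs hct, ?_⟩, ?_⟩
  · rw [sum_eq_sum_payload (fun e he => (hF e he).2)]
    exact sum_congr rfl fun j hj => payload_min_of_propResp (fun e _ => ha.nonneg e) hpr (hctw j hj)
  · rintro _ ⟨x, hx, rfl⟩
    exact sum_le_sum_min_of_isLocallyMaximinAlong hF hwB ha hm hcs hx

end EndpointMaps

theorem IsRefinement0.along {I0 : Finset V} {F : Finset (V × V)} {w : V → ℝ} {a : V × V → ℝ}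
    (ha : IsRefinement0 I0 F w a) : IsRefinementAlong F Prod.fst I0 w a :=
  ⟨ha.1, ha.2.1, fun i hi ⟨e, he, hei⟩ => ha.2.2 i hi ⟨e.2, by rwa [← hei]⟩⟩

theorem IsRefinement1.along {I1 : Finset V} {F : Finset (V × V)} {w : V → ℝ} {a : V × V → ℝ}
    (ha : IsRefinement1 I1 F w a) : IsRefinementAlong F Prod.snd I1 w a :=
  ⟨ha.1, ha.2.1, fun j hj ⟨e, he, hej⟩ => ha.2.2 j hj ⟨e.1, by rwa [← hej]⟩⟩

theorem LocallyMaximin0.along {F : Finset (V × V)} {w : V → ℝ} {a : V × V → ℝ}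
    (hm : LocallyMaximin0 F w a) : IsLocallyMaximinAlong F Prod.fst Prod.snd w a :=
  fun e he hpos e' he' hs => hm e he hpos e'.2 (by rwa [← hs])

theorem LocallyMaximin1.along {F : Finset (V × V)} {w : V → ℝ} {a : V × V → ℝ}
    (hm : LocallyMaximin1 F w a) : IsLocallyMaximinAlong F Prod.snd Prod.fst w a :=
  fun e he hpos e' he' ht => hm e he hpos e'.1 (by rwa [← ht])

theorem feasibleMatching_iff_isFeasibleAlong_swap {I0 I1 : Finset V} {F : Finset (V × V)}
    {w : V → ℝ} {c0 c1 : ℝ} {x : V × V → ℝ} :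
    FeasibleMatching I0 I1 F w c0 c1 x ↔
      IsFeasibleAlong F Prod.snd Prod.fst I1 I0 w c1 c0 x := by
  unfold FeasibleMatching IsFeasibleAlong
  tauto

/-- When `ρ*(j) = 0` the payload `p*(j)` vanishes as well, so Lean's `x / 0 = 0` gives the same
sum as the convention `min{x/0, c} = c`. -/
theorem maximum_matching_value_formula
    (I0 I1 : Finset V) (F : Finset (V × V)) (w : V → ℝ)
    (hG : IsInstance I0 I1 F w)
    (a0 a1 : V × V → ℝ)
    (ha0 : IsRefinement0 I0 F w a0) (ha1 : IsRefinement1 I1 F w a1)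
    (hm0 : LocallyMaximin0 F w a0) (hm1 : LocallyMaximin1 F w a1)
    (hpr0 : IsPropRespOf0 F w a0 a1) (hpr1 : IsPropRespOf1 F w a1 a0)
    (c0 c1 : ℝ) (hc0 : 0 ≤ c0) (hc1 : 0 ≤ c1) :
    IsGreatest {v : ℝ | ∃ x, FeasibleMatching I0 I1 F w c0 c1 x ∧ matchVal F x = v}
      (∑ j ∈ I1, min (c1 / density1 F w a0 j) c0 * payload1 F a0 j) ∧
    IsGreatest {v : ℝ | ∃ x, FeasibleMatching I0 I1 F w c0 c1 x ∧ matchVal F x = v}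
      (∑ i ∈ I0, min (c0 / density0 F w a1 i) c1 * payload0 F a1 i) := by
  obtain ⟨-, hF, hw⟩ := hG
  refine ⟨isGreatest_sum_min_div_density_mul_payload hF hw ha0.along ha1.along hm0.along hpr0.2
    hc0 hc1, ?_⟩
  have h := isGreatest_sum_min_div_density_mul_payload (fun e he => (hF e he).symm)
    (by rwa [union_comm]) ha1.along ha0.along hm1.along hpr1.2 hc1 hc0
  simp only [← feasibleMatching_iff_isFeasibleAlong_swap] at h
  exact h
end

section
/- Let G = (I⁰, I¹; F; w) be a distribution instance, let ι ∈ {0,1} and 0 ≤ τ < 1. Suppose α^ι is a refinement of the side-ι weights achieving τ-multiplicative error, and α^ι̅ is its proportional response. Then for every γ ≥ 0, D_γ(α⁰‖α¹) ≤ ((1−τ)/(1+τ))·D_γ*(G) + 2τ/(1+τ), where D_γ*(G) denotes the minimum of D_γ(β⁰‖β¹) over all refinement pairs (β⁰, β¹) of G. -/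
open Finset

variable {V : Type*} [DecidableEq V]

/-- A distribution instance: an instance where every vertex has at least one neighbour
and the vertex weights on each side sum to 1. -/
def IsDistInstance (I0 I1 : Finset V) (F : Finset (V × V)) (w : V → ℝ) : Prop :=
  IsInstance I0 I1 F w ∧
    (∀ i ∈ I0, ∃ j, (i, j) ∈ F) ∧ (∀ j ∈ I1, ∃ i, (i, j) ∈ F) ∧
    (∑ i ∈ I0, w i = 1) ∧ (∑ j ∈ I1, w j = 1)

/-- Hockey-stick divergence `D_γ(P ‖ Q) = max_{S ⊆ F} (Q(S) - γ·P(S))`. -/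
noncomputable def hsDiv (F : Finset (V × V)) (γ : ℝ) (P Q : V × V → ℝ) : ℝ :=
  F.powerset.sup' ⟨∅, Finset.empty_mem_powerset F⟩
    (fun S => (∑ e ∈ S, Q e) - γ * ∑ e ∈ S, P e)

/-!
If `β` is the proportional response to a side-0 refinement `α` with payload densities `ρ`, then
`β e = α e / ρ j` on every edge `e` into `j`, so any positively homogeneous edge sum of the pair
collapses to a vertex sum: `D_γ(α ‖ β) = ∑ⱼ wⱼ (1 - γ ρⱼ)⁺` and `D_γ(β ‖ α) = ∑ⱼ wⱼ (ρⱼ - γ)⁺`.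
A `τ`-error gives `ρ ≥ (1 - τ) ρ*`, which bounds these sums by `(1 - τ)` times their value at `ρ*`
plus `τ`. At `ρ*` they are lower bounds for `D_γ(β⁰ ‖ β¹)` for every refinement pair: a locally
maximin refinement carries the largest possible mass on the edges into any sublevel set of `ρ*`,
so the edges into `{γ ρ* < 1}` (resp. into `{ρ* > γ}`) witness the bound. Finally `D_γ ≤ 1`
turns `(1 - τ) D* + τ` into the stated bound, and the case `ι = 1` is the case `ι = 0` with the
two sides exchanged.
-/

lemma sum_mul_max_zero_eq_sum_filter {ι : Type*} (s : Finset ι) (c g : ι → ℝ) :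
    ∑ i ∈ s, c i * max (g i) 0 = ∑ i ∈ s with 0 < g i, c i * g i := by
  rw [Finset.sum_filter]
  refine Finset.sum_congr rfl fun i _ => ?_
  split_ifs with h
  · rw [max_eq_left h.le]
  · rw [max_eq_right (not_lt.1 h), mul_zero]

lemma sum_mul_max_one_sub_le {ι : Type*} {s : Finset ι} {c ρ ρ' : ι → ℝ} {γ τ : ℝ}
    (hγ : 0 ≤ γ) (hτ0 : 0 ≤ τ) (hτ1 : τ ≤ 1) (hc : ∀ i ∈ s, 0 ≤ c i) (hc1 : ∑ i ∈ s, c i = 1)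
    (hρ : ∀ i ∈ s, (1 - τ) * ρ' i ≤ ρ i) :
    ∑ i ∈ s, c i * max (1 - γ * ρ i) 0 ≤ (1 - τ) * ∑ i ∈ s, c i * max (1 - γ * ρ' i) 0 + τ := by
  have hpoint : ∀ i ∈ s, max (1 - γ * ρ i) 0 ≤ (1 - τ) * max (1 - γ * ρ' i) 0 + τ := by
    intro i hi
    have hmax := mul_le_mul_of_nonneg_left (le_max_left (1 - γ * ρ' i) 0) (sub_nonneg.2 hτ1)
    refine max_le ?_ (by positivity)
    nlinarith [mul_le_mul_of_nonneg_left (hρ i hi) hγ]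
  calc ∑ i ∈ s, c i * max (1 - γ * ρ i) 0
      ≤ ∑ i ∈ s, c i * ((1 - τ) * max (1 - γ * ρ' i) 0 + τ) :=
        Finset.sum_le_sum fun i hi => mul_le_mul_of_nonneg_left (hpoint i hi) (hc i hi)
    _ = (1 - τ) * ∑ i ∈ s, c i * max (1 - γ * ρ' i) 0 + τ * ∑ i ∈ s, c i := by
        rw [Finset.mul_sum, Finset.mul_sum, ← Finset.sum_add_distrib]
        exact Finset.sum_congr rfl fun i _ => by ring
    _ = (1 - τ) * ∑ i ∈ s, c i * max (1 - γ * ρ' i) 0 + τ := by rw [hc1, mul_one]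

lemma sum_mul_max_sub_le {ι : Type*} {s : Finset ι} {c ρ ρ' : ι → ℝ} {γ τ : ℝ}
    (hγ : 0 ≤ γ) (hτ0 : 0 ≤ τ) (hτ1 : τ ≤ 1) (hc : ∀ i ∈ s, 0 ≤ c i)
    (hcρ : ∑ i ∈ s, c i * ρ i = 1) (hcρ' : ∑ i ∈ s, c i * ρ' i = 1)
    (hρ : ∀ i ∈ s, (1 - τ) * ρ' i ≤ ρ i) :
    ∑ i ∈ s, c i * max (ρ i - γ) 0 ≤ (1 - τ) * ∑ i ∈ s, c i * max (ρ' i - γ) 0 + τ := by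
  -- `max (x - γ) 0 - x = - min x γ`, and `min ρ γ ≥ (1 - τ) * min ρ' γ`
  have hpoint : ∀ i ∈ s, max (ρ i - γ) 0 - ρ i ≤ (1 - τ) * (max (ρ' i - γ) 0 - ρ' i) := by
    intro i hi
    have h1 := mul_le_mul_of_nonneg_left (le_max_left (ρ' i - γ) 0) (sub_nonneg.2 hτ1)
    have h2 := mul_le_mul_of_nonneg_left (le_max_right (ρ' i - γ) 0) (sub_nonneg.2 hτ1)
    rw [sub_le_iff_le_add]
    exact max_le (by nlinarith) (by nlinarith [hρ i hi])
  have hsum := Finset.sum_le_sum fun i hi => mul_le_mul_of_nonneg_left (hpoint i hi) (hc i hi)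
  simp only [mul_sub, mul_left_comm (c _) (1 - τ), ← Finset.mul_sum, Finset.sum_sub_distrib,
    hcρ, hcρ'] at hsum
  linarith

lemma le_hsDiv {α : Type*} {F S : Finset (α × α)} (γ : ℝ) (P Q : α × α → ℝ) (hS : S ⊆ F) :
    ∑ e ∈ S, Q e - γ * ∑ e ∈ S, P e ≤ hsDiv F γ P Q :=
  Finset.le_sup' (fun S => ∑ e ∈ S, Q e - γ * ∑ e ∈ S, P e) (Finset.mem_powerset.2 hS)

lemma hsDiv_eq_sum_max {α : Type*} (F : Finset (α × α)) (γ : ℝ) (P Q : α × α → ℝ) :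
    hsDiv F γ P Q = ∑ e ∈ F, max (Q e - γ * P e) 0 := by
  refine le_antisymm (Finset.sup'_le _ _ fun S hS => ?_) ?_
  · rw [Finset.mul_sum, ← Finset.sum_sub_distrib]
    calc ∑ e ∈ S, (Q e - γ * P e) ≤ ∑ e ∈ S, max (Q e - γ * P e) 0 :=
          Finset.sum_le_sum fun e _ => le_max_left _ _
      _ ≤ ∑ e ∈ F, max (Q e - γ * P e) 0 :=
          Finset.sum_le_sum_of_subset_of_nonneg (Finset.mem_powerset.1 hS)
            fun e _ _ => le_max_right _ _
  · calc ∑ e ∈ F, max (Q e - γ * P e) 0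
        = ∑ e ∈ F with 0 < Q e - γ * P e, (Q e - γ * P e) := by
          simpa using sum_mul_max_zero_eq_sum_filter F 1 fun e => Q e - γ * P e
      _ ≤ hsDiv F γ P Q := by
          rw [Finset.sum_sub_distrib, ← Finset.mul_sum]
          exact le_hsDiv γ P Q (Finset.filter_subset _ _)

lemma hsDiv_le_sum {α : Type*} {F : Finset (α × α)} {γ : ℝ} (hγ : 0 ≤ γ) {P Q : α × α → ℝ}
    (hP : ∀ e, 0 ≤ P e) (hQ : ∀ e, 0 ≤ Q e) : hsDiv F γ P Q ≤ ∑ e ∈ F, Q e := by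
  rw [hsDiv_eq_sum_max]
  exact Finset.sum_le_sum fun e _ => max_le (sub_le_self _ (mul_nonneg hγ (hP e))) (hQ e)

section

variable {I0 I1 : Finset V} {F : Finset (V × V)} {w : V → ℝ}

lemma IsDistInstance.weight_pos_left (hG : IsDistInstance I0 I1 F w) {i : V} (hi : i ∈ I0) :
    0 < w i :=
  hG.1.2.2 i (Finset.mem_union_left _ hi)

lemma IsDistInstance.weight_pos_right (hG : IsDistInstance I0 I1 F w) {j : V} (hj : j ∈ I1) :
    0 < w j :=
  hG.1.2.2 j (Finset.mem_union_right _ hj)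

lemma IsRefinement0.sum_eq_one (hG : IsDistInstance I0 I1 F w) {a : V × V → ℝ}
    (ha : IsRefinement0 I0 F w a) : ∑ e ∈ F, a e = 1 := by
  rw [← Finset.sum_fiberwise_of_maps_to (g := Prod.fst) (t := I0)
    (fun e he => (hG.1.2.1 e he).1) a, ← hG.2.2.2.1]
  exact Finset.sum_congr rfl fun i hi => ha.2.2 i hi (hG.2.1 i hi)

lemma IsRefinement1.sum_eq_one (hG : IsDistInstance I0 I1 F w) {a : V × V → ℝ}
    (ha : IsRefinement1 I1 F w a) : ∑ e ∈ F, a e = 1 := by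
  rw [← Finset.sum_fiberwise_of_maps_to (g := Prod.snd) (t := I1)
    (fun e he => (hG.1.2.1 e he).2) a, ← hG.2.2.2.2]
  exact Finset.sum_congr rfl fun j hj => ha.2.2 j hj (hG.2.2.1 j hj)

lemma mul_density1 {a : V × V → ℝ} {j : V} (hw : w j ≠ 0) :
    w j * density1 F w a j = payload1 F a j :=
  mul_div_cancel₀ _ hw

lemma sum_filter_snd_eq_sum_payload1 (hF : ∀ e ∈ F, e.2 ∈ I1) (J : V → Prop) [DecidablePred J]
    (a : V × V → ℝ) : ∑ e ∈ F with J e.2, a e = ∑ j ∈ I1 with J j, payload1 F a j := by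
  simp only [payload1]
  rw [Finset.sum_fiberwise_eq_sum_filter]
  refine Finset.sum_congr (Finset.filter_congr fun e he => ?_) fun _ _ => rfl
  simp [hF e he]

lemma IsRefinement1.sum_filter_snd (hG : IsDistInstance I0 I1 F w) {a : V × V → ℝ}
    (ha : IsRefinement1 I1 F w a) (J : V → Prop) [DecidablePred J] :
    ∑ e ∈ F with J e.2, a e = ∑ j ∈ I1 with J j, w j := by
  rw [sum_filter_snd_eq_sum_payload1 (fun e he => (hG.1.2.1 e he).2)]
  refine Finset.sum_congr rfl fun j hj => ?_
  have hj := (Finset.mem_filter.1 hj).1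
  exact ha.2.2 j hj (hG.2.2.1 j hj)

lemma LocallyMaximin0.payload1_pos (hG : IsDistInstance I0 I1 F w) {a : V × V → ℝ}
    (ha : IsRefinement0 I0 F w a) (hm : LocallyMaximin0 F w a) {j : V} (hj : j ∈ I1) :
    0 < payload1 F a j := by
  obtain ⟨i, hij⟩ := hG.2.2.1 j hj
  have hi : i ∈ I0 := (hG.1.2.1 _ hij).1
  obtain ⟨e, he, hpos⟩ : ∃ e ∈ F.filter (fun e => e.1 = i), 0 < a e := by
    by_contra! h
    have hzero : payload0 F a i = 0 :=
      Finset.sum_eq_zero fun e he => le_antisymm (h e he) (ha.1 e)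
    linarith [ha.2.2 i hi ⟨j, hij⟩, hG.weight_pos_left hi]
  obtain ⟨heF, rfl⟩ := Finset.mem_filter.1 he
  have hk : 0 < density1 F w a e.2 := by
    refine div_pos (hpos.trans_le ?_) (hG.weight_pos_right (hG.1.2.1 e heF).2)
    exact Finset.single_le_sum (fun e _ => ha.1 e) (Finset.mem_filter.2 ⟨heF, rfl⟩)
  exact (div_pos_iff_of_pos_right (hG.weight_pos_right hj)).1
    (hk.trans_le (hm e heF hpos j hij))

lemma LocallyMaximin0.sum_filter_le (hG : IsDistInstance I0 I1 F w) {astar c : V × V → ℝ}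
    (hastar : IsRefinement0 I0 F w astar) (hm : LocallyMaximin0 F w astar)
    (hc : IsRefinement0 I0 F w c) {J : V → Prop} [DecidablePred J]
    (hJ : ∀ j k, J j → density1 F w astar k ≤ density1 F w astar j → J k) :
    ∑ e ∈ F with J e.2, c e ≤ ∑ e ∈ F with J e.2, astar e := by
  have hfst : ∀ e ∈ F.filter (fun e => J e.2), e.1 ∈ I0 :=
    fun e he => (hG.1.2.1 e (Finset.mem_filter.1 he).1).1
  rw [← Finset.sum_fiberwise_of_maps_to hfst c, ← Finset.sum_fiberwise_of_maps_to hfst astar]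
  refine Finset.sum_le_sum fun i hi => ?_
  simp only [Finset.filter_comm (fun e : V × V => J e.2)]
  by_cases hnb : ∃ e ∈ F, e.1 = i ∧ J e.2
  · obtain ⟨e₀, he₀F, rfl, he₀J⟩ := hnb
    -- every edge along which `astar` sends mass from `e₀.1` ends in `J`
    have hall :
        ∑ e ∈ F.filter (fun e => e.1 = e₀.1) with J e.2, astar e = payload0 F astar e₀.1 := by
      refine Finset.sum_filter_of_ne fun e he hne => ?_
      obtain ⟨heF, he1⟩ := Finset.mem_filter.1 he
      have hpos : 0 < astar e := lt_of_le_of_ne (hastar.1 e) (Ne.symm hne)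
      exact hJ _ _ he₀J (hm e heF hpos e₀.2 (by rw [he1]; exact he₀F))
    calc ∑ e ∈ F.filter (fun e => e.1 = e₀.1) with J e.2, c e ≤ payload0 F c e₀.1 :=
          Finset.sum_le_sum_of_subset_of_nonneg (Finset.filter_subset _ _) fun e _ _ => hc.1 e
      _ = payload0 F astar e₀.1 := by rw [hc.2.2 _ hi (hG.2.1 _ hi), hastar.2.2 _ hi (hG.2.1 _ hi)]
      _ = _ := hall.symm
  · push Not at hnb
    have hempty : (F.filter (fun e => e.1 = i)).filter (fun e => J e.2) = ∅ :=
      Finset.filter_eq_empty_iff.2 fun e he =>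
        hnb e (Finset.mem_filter.1 he).1 (Finset.mem_filter.1 he).2
    simp [hempty]

lemma LocallyMaximin0.sum_filter_ge (hG : IsDistInstance I0 I1 F w) {astar c : V × V → ℝ}
    (hastar : IsRefinement0 I0 F w astar) (hm : LocallyMaximin0 F w astar)
    (hc : IsRefinement0 I0 F w c) {K : V → Prop} [DecidablePred K]
    (hK : ∀ j k, K j → density1 F w astar j ≤ density1 F w astar k → K k) :
    ∑ e ∈ F with K e.2, astar e ≤ ∑ e ∈ F with K e.2, c e := by
  have hcompl := hm.sum_filter_le hG hastar hc (J := fun j => ¬ K j)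
    fun j k hj hkj hk => hj (hK k j hk hkj)
  have htot_c := Finset.sum_filter_add_sum_filter_not F (fun e => K e.2) c
  have htot_astar := Finset.sum_filter_add_sum_filter_not F (fun e => K e.2) astar
  rw [hc.sum_eq_one hG] at htot_c
  rw [hastar.sum_eq_one hG] at htot_astar
  linarith

lemma LocallyMaximin0.sum_mul_max_one_sub_le_hsDiv (hG : IsDistInstance I0 I1 F w)
    {astar : V × V → ℝ} (hastar : IsRefinement0 I0 F w astar) (hm : LocallyMaximin0 F w astar)
    {γ : ℝ} (hγ : 0 ≤ γ) {c0 c1 : V × V → ℝ}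
    (hc0 : IsRefinement0 I0 F w c0) (hc1 : IsRefinement1 I1 F w c1) :
    ∑ j ∈ I1, w j * max (1 - γ * density1 F w astar j) 0 ≤ hsDiv F γ c0 c1 := by
  have hF : ∀ e ∈ F, e.2 ∈ I1 := fun e he => (hG.1.2.1 e he).2
  set J : V → Prop := fun j => 0 < 1 - γ * density1 F w astar j
  have hJ : ∀ j k, J j → density1 F w astar k ≤ density1 F w astar j → J k :=
    fun j k hj hkj => by simp only [J] at hj ⊢; nlinarith [mul_le_mul_of_nonneg_left hkj hγ]
  calc ∑ j ∈ I1, w j * max (1 - γ * density1 F w astar j) 0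
      = ∑ j ∈ I1 with J j, (w j - γ * payload1 F astar j) := by
        rw [sum_mul_max_zero_eq_sum_filter]
        refine Finset.sum_congr rfl fun j hj => ?_
        rw [← mul_density1 (hG.weight_pos_right (Finset.mem_filter.1 hj).1).ne']
        ring
    _ = ∑ e ∈ F with J e.2, c1 e - γ * ∑ e ∈ F with J e.2, astar e := by
        rw [hc1.sum_filter_snd hG J, sum_filter_snd_eq_sum_payload1 hF J, Finset.mul_sum,
          Finset.sum_sub_distrib]
    _ ≤ ∑ e ∈ F with J e.2, c1 e - γ * ∑ e ∈ F with J e.2, c0 e := by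
        gcongr ?_ - γ * ?_
        exact hm.sum_filter_le hG hastar hc0 hJ
    _ ≤ hsDiv F γ c0 c1 := le_hsDiv γ c0 c1 (Finset.filter_subset _ _)

lemma LocallyMaximin0.sum_mul_max_sub_le_hsDiv (hG : IsDistInstance I0 I1 F w)
    {astar : V × V → ℝ} (hastar : IsRefinement0 I0 F w astar) (hm : LocallyMaximin0 F w astar)
    {γ : ℝ} {c0 c1 : V × V → ℝ}
    (hc0 : IsRefinement0 I0 F w c0) (hc1 : IsRefinement1 I1 F w c1) :
    ∑ j ∈ I1, w j * max (density1 F w astar j - γ) 0 ≤ hsDiv F γ c1 c0 := by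
  have hF : ∀ e ∈ F, e.2 ∈ I1 := fun e he => (hG.1.2.1 e he).2
  set K : V → Prop := fun j => 0 < density1 F w astar j - γ
  have hK : ∀ j k, K j → density1 F w astar j ≤ density1 F w astar k → K k :=
    fun j k hj hjk => by simp only [K] at hj ⊢; linarith
  calc ∑ j ∈ I1, w j * max (density1 F w astar j - γ) 0
      = ∑ j ∈ I1 with K j, (payload1 F astar j - γ * w j) := by
        rw [sum_mul_max_zero_eq_sum_filter]
        refine Finset.sum_congr rfl fun j hj => ?_
        rw [← mul_density1 (hG.weight_pos_right (Finset.mem_filter.1 hj).1).ne']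
        ring
    _ = ∑ e ∈ F with K e.2, astar e - γ * ∑ e ∈ F with K e.2, c1 e := by
        rw [hc1.sum_filter_snd hG K, sum_filter_snd_eq_sum_payload1 hF K, Finset.mul_sum,
          Finset.sum_sub_distrib]
    _ ≤ ∑ e ∈ F with K e.2, c0 e - γ * ∑ e ∈ F with K e.2, c1 e := by
        gcongr ?_ - _
        exact hm.sum_filter_ge hG hastar hc0 hK
    _ ≤ hsDiv F γ c1 c0 := le_hsDiv γ c1 c0 (Finset.filter_subset _ _)

lemma IsPropRespOf0.sum_eq_sum_density1 (hG : IsDistInstance I0 I1 F w) {a b : V × V → ℝ}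
    (ha : ∀ e, 0 ≤ a e) (hp : ∀ j ∈ I1, 0 < payload1 F a j) (hb : IsPropRespOf0 F w a b)
    {h : ℝ → ℝ → ℝ} (hh : ∀ t, 0 ≤ t → ∀ x y, h (t * x) (t * y) = t * h x y) :
    ∑ e ∈ F, h (a e) (b e) = ∑ j ∈ I1, w j * h (density1 F w a j) 1 := by
  rw [← Finset.sum_fiberwise_of_maps_to (g := Prod.snd) fun e he => (hG.1.2.1 e he).2]
  refine Finset.sum_congr rfl fun j hj => ?_
  have hw := hG.weight_pos_right hj
  have hpj := hp j hj
  have hedge : ∀ e ∈ F.filter (fun e => e.2 = j),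
      h (a e) (b e) = a e * h 1 (w j / payload1 F a j) := by
    intro e he
    obtain ⟨heF, rfl⟩ := Finset.mem_filter.1 he
    rw [← hh _ (ha e), hb.2 e heF, mul_one, mul_div_assoc]
  have hρ : h (density1 F w a j) 1 = density1 F w a j * h 1 (w j / payload1 F a j) := by
    rw [density1, ← hh _ (div_pos hpj hw).le, mul_one]
    congr 1
    field_simp
  rw [Finset.sum_congr rfl hedge, ← Finset.sum_mul, hρ, ← mul_assoc, mul_density1 hw.ne']
  rfl

lemma IsPropRespOf0.hsDiv_eq (hG : IsDistInstance I0 I1 F w) {a b : V × V → ℝ}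
    (ha : ∀ e, 0 ≤ a e) (hp : ∀ j ∈ I1, 0 < payload1 F a j) (hb : IsPropRespOf0 F w a b)
    (γ : ℝ) : hsDiv F γ a b = ∑ j ∈ I1, w j * max (1 - γ * density1 F w a j) 0 := by
  rw [hsDiv_eq_sum_max, hb.sum_eq_sum_density1 hG ha hp (h := fun x y => max (y - γ * x) 0)]
  intro t ht x y
  rw [mul_max_of_nonneg _ _ ht, mul_zero, mul_sub, mul_left_comm]

lemma IsPropRespOf0.hsDiv_swap_eq (hG : IsDistInstance I0 I1 F w) {a b : V × V → ℝ}
    (ha : ∀ e, 0 ≤ a e) (hp : ∀ j ∈ I1, 0 < payload1 F a j) (hb : IsPropRespOf0 F w a b)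
    (γ : ℝ) : hsDiv F γ b a = ∑ j ∈ I1, w j * max (density1 F w a j - γ) 0 := by
  rw [hsDiv_eq_sum_max, hb.sum_eq_sum_density1 hG ha hp (h := fun x y => max (x - γ * y) 0)]
  · simp only [mul_one]
  intro t ht x y
  rw [mul_max_of_nonneg _ _ ht, mul_zero, mul_sub, mul_left_comm]

lemma IsRefinement0.sum_mul_density1 (hG : IsDistInstance I0 I1 F w) {a : V × V → ℝ}
    (ha : IsRefinement0 I0 F w a) : ∑ j ∈ I1, w j * density1 F w a j = 1 := by
  rw [Finset.sum_congr rfl fun j hj => mul_density1 (hG.weight_pos_right hj).ne',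
    ← ha.sum_eq_one hG]
  exact Finset.sum_fiberwise_of_maps_to (fun e he => (hG.1.2.1 e he).2) a

lemma LocallyMaximin0.payload1_pos_of_error (hG : IsDistInstance I0 I1 F w) {τ : ℝ} (hτ1 : τ < 1)
    {astar a : V × V → ℝ} (hastar : IsRefinement0 I0 F w astar) (hm : LocallyMaximin0 F w astar)
    (herr : ∀ j ∈ I1, |density1 F w a j - density1 F w astar j| ≤ τ * density1 F w astar j)
    {j : V} (hj : j ∈ I1) : 0 < payload1 F a j := by
  have hw := hG.weight_pos_right hj
  have hstar : 0 < density1 F w astar j := div_pos (hm.payload1_pos hG hastar hj) hw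
  rw [← mul_density1 hw.ne']
  exact mul_pos hw (by nlinarith [(abs_le.1 (herr j hj)).1])

lemma IsPropRespOf0.hsDiv_le (hG : IsDistInstance I0 I1 F w) {τ : ℝ} (hτ0 : 0 ≤ τ) (hτ1 : τ < 1)
    {astar a b : V × V → ℝ} (hastar : IsRefinement0 I0 F w astar) (hm : LocallyMaximin0 F w astar)
    (ha : IsRefinement0 I0 F w a)
    (herr : ∀ j ∈ I1, |density1 F w a j - density1 F w astar j| ≤ τ * density1 F w astar j)
    (hb : IsPropRespOf0 F w a b) {γ : ℝ} (hγ : 0 ≤ γ) {c0 c1 : V × V → ℝ}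
    (hc0 : IsRefinement0 I0 F w c0) (hc1 : IsRefinement1 I1 F w c1) :
    hsDiv F γ a b ≤ (1 - τ) * hsDiv F γ c0 c1 + τ := by
  rw [hb.hsDiv_eq hG ha.1 (fun j hj => hm.payload1_pos_of_error hG hτ1 hastar herr hj)]
  calc ∑ j ∈ I1, w j * max (1 - γ * density1 F w a j) 0
      ≤ (1 - τ) * ∑ j ∈ I1, w j * max (1 - γ * density1 F w astar j) 0 + τ :=
        sum_mul_max_one_sub_le hγ hτ0 hτ1.le (fun j hj => (hG.weight_pos_right hj).le)
          hG.2.2.2.2 fun j hj => by linarith [(abs_le.1 (herr j hj)).1]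
    _ ≤ (1 - τ) * hsDiv F γ c0 c1 + τ := by
        gcongr (1 - τ) * ?_ + _
        exact hm.sum_mul_max_one_sub_le_hsDiv hG hastar hγ hc0 hc1

lemma IsPropRespOf0.hsDiv_swap_le (hG : IsDistInstance I0 I1 F w) {τ : ℝ} (hτ0 : 0 ≤ τ)
    (hτ1 : τ < 1) {astar a b : V × V → ℝ} (hastar : IsRefinement0 I0 F w astar)
    (hm : LocallyMaximin0 F w astar) (ha : IsRefinement0 I0 F w a)
    (herr : ∀ j ∈ I1, |density1 F w a j - density1 F w astar j| ≤ τ * density1 F w astar j)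
    (hb : IsPropRespOf0 F w a b) {γ : ℝ} (hγ : 0 ≤ γ) {c0 c1 : V × V → ℝ}
    (hc0 : IsRefinement0 I0 F w c0) (hc1 : IsRefinement1 I1 F w c1) :
    hsDiv F γ b a ≤ (1 - τ) * hsDiv F γ c1 c0 + τ := by
  rw [hb.hsDiv_swap_eq hG ha.1 (fun j hj => hm.payload1_pos_of_error hG hτ1 hastar herr hj)]
  calc ∑ j ∈ I1, w j * max (density1 F w a j - γ) 0
      ≤ (1 - τ) * ∑ j ∈ I1, w j * max (density1 F w astar j - γ) 0 + τ :=
        sum_mul_max_sub_le hγ hτ0 hτ1.le (fun j hj => (hG.weight_pos_right hj).le)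
          (ha.sum_mul_density1 hG) (hastar.sum_mul_density1 hG)
          fun j hj => by linarith [(abs_le.1 (herr j hj)).1]
    _ ≤ (1 - τ) * hsDiv F γ c1 c0 + τ := by
        gcongr (1 - τ) * ?_ + _
        exact hm.sum_mul_max_sub_le_hsDiv hG hastar hc0 hc1

end

def edgeSwap {α : Type*} (F : Finset (α × α)) : Finset (α × α) :=
  F.map (Equiv.prodComm α α).toEmbedding

lemma mem_edgeSwap {α : Type*} {F : Finset (α × α)} {e : α × α} :
    e ∈ edgeSwap F ↔ e.swap ∈ F :=
  Finset.mem_map_equiv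

lemma hsDiv_edgeSwap {α : Type*} (F : Finset (α × α)) (γ : ℝ) (P Q : α × α → ℝ) :
    hsDiv (edgeSwap F) γ (P ∘ Prod.swap) (Q ∘ Prod.swap) = hsDiv F γ P Q := by
  rw [hsDiv_eq_sum_max, hsDiv_eq_sum_max, edgeSwap, Finset.sum_map]
  rfl

section

variable {I0 I1 : Finset V} {F : Finset (V × V)} {w : V → ℝ}

lemma payload0_edgeSwap (a : V × V → ℝ) (i : V) :
    payload0 (edgeSwap F) (a ∘ Prod.swap) i = payload1 F a i := by
  rw [payload0, edgeSwap, Finset.filter_map, Finset.sum_map]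
  rfl

lemma payload1_edgeSwap (a : V × V → ℝ) (j : V) :
    payload1 (edgeSwap F) (a ∘ Prod.swap) j = payload0 F a j := by
  rw [payload1, edgeSwap, Finset.filter_map, Finset.sum_map]
  rfl

lemma density1_edgeSwap (a : V × V → ℝ) (j : V) :
    density1 (edgeSwap F) w (a ∘ Prod.swap) j = density0 F w a j := by
  rw [density1, density0, payload1_edgeSwap]

lemma IsDistInstance.edgeSwap (hG : IsDistInstance I0 I1 F w) :
    IsDistInstance I1 I0 (edgeSwap F) w := by
  obtain ⟨⟨hdisj, hF, hw⟩, hnb0, hnb1, hw0, hw1⟩ := hG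
  refine ⟨⟨hdisj.symm, fun e he => (hF _ (mem_edgeSwap.1 he)).symm,
    fun v hv => hw v (Finset.union_comm I0 I1 ▸ hv)⟩, fun j hj => ?_, fun i hi => ?_, hw1, hw0⟩
  · obtain ⟨i, hij⟩ := hnb1 j hj
    exact ⟨i, mem_edgeSwap.2 hij⟩
  · obtain ⟨j, hij⟩ := hnb0 i hi
    exact ⟨j, mem_edgeSwap.2 hij⟩

lemma IsRefinement0.edgeSwap {a : V × V → ℝ} (ha : IsRefinement0 I0 F w a) :
    IsRefinement1 I0 (edgeSwap F) w (a ∘ Prod.swap) :=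
  ⟨fun _ => ha.1 _, fun _ he => ha.2.1 _ fun h => he (mem_edgeSwap.2 h),
    fun i hi ⟨j, hji⟩ => (payload1_edgeSwap a i).trans (ha.2.2 i hi ⟨j, mem_edgeSwap.1 hji⟩)⟩

lemma IsRefinement1.edgeSwap {a : V × V → ℝ} (ha : IsRefinement1 I1 F w a) :
    IsRefinement0 I1 (edgeSwap F) w (a ∘ Prod.swap) :=
  ⟨fun _ => ha.1 _, fun _ he => ha.2.1 _ fun h => he (mem_edgeSwap.2 h),
    fun j hj ⟨i, hji⟩ => (payload0_edgeSwap a j).trans (ha.2.2 j hj ⟨i, mem_edgeSwap.1 hji⟩)⟩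

lemma LocallyMaximin1.edgeSwap {a : V × V → ℝ} (hm : LocallyMaximin1 F w a) :
    LocallyMaximin0 (edgeSwap F) w (a ∘ Prod.swap) := fun e he hpos k hk => by
  rw [density1_edgeSwap, density1_edgeSwap]
  exact hm _ (mem_edgeSwap.1 he) hpos k (mem_edgeSwap.1 hk)

lemma IsPropRespOf1.edgeSwap {b a : V × V → ℝ} (ha : IsPropRespOf1 F w b a) :
    IsPropRespOf0 (edgeSwap F) w (b ∘ Prod.swap) (a ∘ Prod.swap) :=
  ⟨fun _ he => ha.1 _ fun h => he (mem_edgeSwap.2 h), fun e he => by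
    rw [payload1_edgeSwap]
    exact ha.2 _ (mem_edgeSwap.1 he)⟩

end

/-- **Approximate refinements give approximately closest pairs for hockey-stick divergences.**
In a distribution instance, fix a side `ι ∈ {0,1}` and `0 ≤ τ < 1`; suppose `α^ι` is a
refinement of the side-`ι` weights achieving `τ`-multiplicative error (with respect to the
density vector induced by a locally maximin refinement of the side-`ι` weights, which is
independent of its choice), and `α^ι̅` is its proportional response.  Then for every `γ ≥ 0`,
`D_γ(α⁰ ‖ α¹) ≤ ((1-τ)/(1+τ))·D_γ*(G) + 2τ/(1+τ)`, where `D_γ*(G)` is the minimum of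
`D_γ(β⁰ ‖ β¹)` over all refinement pairs `(β⁰, β¹)`.  The choice of `ι` is expressed by the
disjunction `hcase`. -/
theorem approx_refinement_hockey_stick_bound
    (I0 I1 : Finset V) (F : Finset (V × V)) (w : V → ℝ)
    (hG : IsDistInstance I0 I1 F w)
    (τ : ℝ) (hτ0 : 0 ≤ τ) (hτ1 : τ < 1)
    (astar : V × V → ℝ)
    (hastar : IsRefinement0 I0 F w astar) (hmastar : LocallyMaximin0 F w astar)
    (bstar : V × V → ℝ)
    (hbstar : IsRefinement1 I1 F w bstar) (hmbstar : LocallyMaximin1 F w bstar)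
    (a0 a1 : V × V → ℝ)
    (ha0 : IsRefinement0 I0 F w a0) (ha1 : IsRefinement1 I1 F w a1)
    (hcase :
      ((∀ j ∈ I1, |density1 F w a0 j - density1 F w astar j| ≤ τ * density1 F w astar j) ∧
          IsPropRespOf0 F w a0 a1) ∨
      ((∀ i ∈ I0, |density0 F w a1 i - density0 F w bstar i| ≤ τ * density0 F w bstar i) ∧
          IsPropRespOf1 F w a1 a0))
    (γ : ℝ) (hγ : 0 ≤ γ)
    (d : ℝ)
    (hd : IsLeast {v : ℝ | ∃ b0 b1 : V × V → ℝ,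
        IsRefinement0 I0 F w b0 ∧ IsRefinement1 I1 F w b1 ∧ v = hsDiv F γ b0 b1} d) :
    hsDiv F γ a0 a1 ≤ (1 - τ) / (1 + τ) * d + 2 * τ / (1 + τ) := by
  obtain ⟨⟨b0, b1, hb0, hb1, rfl⟩, -⟩ := hd
  have hd1 : hsDiv F γ b0 b1 ≤ 1 := (hsDiv_le_sum hγ hb0.1 hb1.1).trans_eq (hb1.sum_eq_one hG)
  have hkey : hsDiv F γ a0 a1 ≤ (1 - τ) * hsDiv F γ b0 b1 + τ := by
    rcases hcase with ⟨herr, hpr⟩ | ⟨herr, hpr⟩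
    · exact hpr.hsDiv_le hG hτ0 hτ1 hastar hmastar ha0 herr hγ hb0 hb1
    · simp only [← density1_edgeSwap] at herr
      simpa only [hsDiv_edgeSwap] using hpr.edgeSwap.hsDiv_swap_le hG.edgeSwap hτ0 hτ1
        hbstar.edgeSwap hmbstar.edgeSwap ha1.edgeSwap herr hγ hb1.edgeSwap hb0.edgeSwap
  rw [div_mul_eq_mul_div, ← add_div, le_div_iff₀ (by linarith)]
  nlinarith [mul_nonneg (mul_nonneg hτ0 (sub_nonneg.2 hτ1.le)) (sub_nonneg.2 hd1)]
end

section
/- Let g : [0,1] → [0,1] be continuous and concave with g(x) ≥ x for all x ∈ [0,1] (i.e., g is a power function), let γ ≥ 1, extend g to [0,∞) by g(y) = 1 for y ≥ 1, and set x₁ = inf{y ∈ [0,1] : g(y) = 1}. Then for every x ∈ [0,1]: (i) g(γ·x) ≤ min{γ·(g(x) − g(0)) + g(0), 1}, and (ii) (1/γ)·g(x) + 1 − 1/γ ≤ g((1/γ)·x + (1 − 1/γ)·x₁). That is, for each orientation the radial stretching of g by factor γ is pointwise at most the tangential stretching of g by factor γ. -/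
/-!
Both inequalities are instances of concavity. For (i), `x = (1/γ)(γx) + (1 - 1/γ)·0` when
`γx ≤ 1`; when `γx ≥ 1` the left side is `1`, and the chord bound `g x ≥ g 0 + x (1 - g 0)`
from `g 1 = 1` already gives `γ (g x - g 0) + g 0 ≥ γx (1 - g 0) + g 0 ≥ 1`. For (ii), `x₁`
lies in the closed level set `{g = 1}`, so concavity between `x` and `x₁` with weight `1/γ`
is exactly the claim.
-/

theorem ConcaveOn.map_smul_le_of_one_le {E : Type*} [AddCommGroup E] [Module ℝ E]
    {s : Set E} {f : E → ℝ} (hf : ConcaveOn ℝ s f) (h0 : 0 ∈ s) {x : E} {γ : ℝ}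
    (hγ : 1 ≤ γ) (hγx : γ • x ∈ s) :
    f (γ • x) ≤ γ * (f x - f 0) + f 0 := by
  have hγ0 : 0 < γ := by linarith
  have hcomb : (1 / γ) • (γ • x) + (1 - 1 / γ) • (0 : E) = x := by
    rw [smul_zero, add_zero, smul_smul, one_div, inv_mul_cancel₀ hγ0.ne', one_smul]
  have key := hf.2 hγx h0 (one_div_nonneg.2 hγ0.le)
    (sub_nonneg.2 (div_le_one_of_le₀ hγ hγ0.le)) (add_sub_cancel (1 / γ) 1)
  rw [hcomb, smul_eq_mul, smul_eq_mul] at key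
  have := mul_le_mul_of_nonneg_left key hγ0.le
  field_simp at this ⊢
  linarith

theorem ConcaveOn.secant_le_of_mem_Icc {f : ℝ → ℝ} (hf : ConcaveOn ℝ (Set.Icc 0 1) f)
    {x : ℝ} (hx : x ∈ Set.Icc (0 : ℝ) 1) :
    f 0 + x * (f 1 - f 0) ≤ f x := by
  have key := hf.2 (x := 1) (y := 0) ⟨zero_le_one, le_rfl⟩ ⟨le_rfl, zero_le_one⟩ hx.1
    (sub_nonneg.2 hx.2) (add_sub_cancel x 1)
  simp only [smul_eq_mul, mul_one, mul_zero, add_zero] at key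
  linarith

theorem ConcaveOn.inv_mul_add_one_sub_inv_le {s : Set ℝ} {f : ℝ → ℝ}
    (hf : ConcaveOn ℝ s f) {x x₁ : ℝ} (hx : x ∈ s) (hx₁ : x₁ ∈ s) (hfx₁ : f x₁ = 1)
    {γ : ℝ} (hγ : 1 ≤ γ) :
    (1 / γ) * f x + 1 - 1 / γ ≤ f ((1 / γ) * x + (1 - 1 / γ) * x₁) := by
  have hγ0 : 0 < γ := by linarith
  have key := hf.2 hx hx₁ (one_div_nonneg.2 hγ0.le)
    (sub_nonneg.2 (div_le_one_of_le₀ hγ hγ0.le)) (add_sub_cancel (1 / γ) 1)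
  simp only [smul_eq_mul, hfx₁] at key
  linarith

theorem ContinuousOn.csInf_mem_setOf_mem_and_eq {s : Set ℝ} {f : ℝ → ℝ} {c : ℝ}
    (hf : ContinuousOn f s) (hs : IsClosed s) (hbdd : BddBelow s) {y : ℝ} (hy : y ∈ s)
    (hfy : f y = c) :
    sInf {z | z ∈ s ∧ f z = c} ∈ {z | z ∈ s ∧ f z = c} :=
  (hf.preimage_isClosed_of_isClosed hs isClosed_singleton).csInf_mem ⟨y, hy, hfy⟩
    (hbdd.mono fun _ hz => hz.1)

theorem radial_le_tangential_stretching_general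
    (g : ℝ → ℝ)
    (hcont : ContinuousOn g (Set.Icc 0 1))
    (hconc : ConcaveOn ℝ (Set.Icc 0 1) g)
    (hle : ∀ x ∈ Set.Icc (0:ℝ) 1, g x ≤ 1)
    (hext : ∀ y : ℝ, 1 ≤ y → g y = 1)
    (γ : ℝ) (hγ : 1 ≤ γ) :
    ∀ x ∈ Set.Icc (0:ℝ) 1,
      g (γ * x) ≤ min (γ * (g x - g 0) + g 0) 1 ∧
      (1 / γ) * g x + 1 - 1 / γ ≤
        g ((1 / γ) * x + (1 - 1 / γ) * sInf {y : ℝ | y ∈ Set.Icc (0:ℝ) 1 ∧ g y = 1}) := by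
  intro x hx
  have h0 : (0 : ℝ) ∈ Set.Icc (0 : ℝ) 1 := ⟨le_rfl, zero_le_one⟩
  have h1 : (1 : ℝ) ∈ Set.Icc (0 : ℝ) 1 := ⟨zero_le_one, le_rfl⟩
  refine ⟨?_, ?_⟩
  · rcases le_or_gt 1 (γ * x) with hγx | hγx
    · have hsecant := hconc.secant_le_of_mem_Icc hx
      rw [hext 1 le_rfl] at hsecant
      have hg0 := hle 0 h0
      rw [hext _ hγx]
      refine le_min ?_ le_rfl
      calc (1 : ℝ) ≤ γ * x * (1 - g 0) + g 0 := by nlinarith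
        _ ≤ γ * (g x - g 0) + g 0 := by nlinarith
    · have hγx_mem : γ * x ∈ Set.Icc (0 : ℝ) 1 := ⟨by nlinarith [hx.1], hγx.le⟩
      exact le_min (hconc.map_smul_le_of_one_le h0 hγ hγx_mem) (hle _ hγx_mem)
  · obtain ⟨hx₁, hgx₁⟩ :=
      hcont.csInf_mem_setOf_mem_and_eq isClosed_Icc bddBelow_Icc h1 (hext 1 le_rfl)
    exact hconc.inv_mul_add_one_sub_inv_le hx hx₁ hgx₁ hγ

/-- **Radial stretching is pointwise at most tangential stretching.**
Let `g : [0,1] → [0,1]` be continuous and concave with `g(x) ≥ x` (a power function),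
extended to `[0,∞)` by `g(y) = 1` for `y ≥ 1`, let `γ ≥ 1`, and let
`x₁ = inf{y ∈ [0,1] : g(y) = 1}`.  Then for every `x ∈ [0,1]`:
(i) `g(γx) ≤ min{γ·(g(x) − g(0)) + g(0), 1}`, and
(ii) `(1/γ)·g(x) + 1 − 1/γ ≤ g((1/γ)·x + (1 − 1/γ)·x₁)`. -/
theorem radial_le_tangential_stretching
    (g : ℝ → ℝ)
    (hcont : ContinuousOn g (Set.Icc 0 1))
    (hconc : ConcaveOn ℝ (Set.Icc 0 1) g)
    (hge : ∀ x ∈ Set.Icc (0:ℝ) 1, x ≤ g x)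
    (hle : ∀ x ∈ Set.Icc (0:ℝ) 1, g x ≤ 1)
    (hext : ∀ y : ℝ, 1 ≤ y → g y = 1)
    (γ : ℝ) (hγ : 1 ≤ γ) :
    ∀ x ∈ Set.Icc (0:ℝ) 1,
      g (γ * x) ≤ min (γ * (g x - g 0) + g 0) 1 ∧
      (1 / γ) * g x + 1 - 1 / γ ≤
        g ((1 / γ) * x + (1 - 1 / γ) * sInf {y : ℝ | y ∈ Set.Icc (0:ℝ) 1 ∧ g y = 1}) :=
  radial_le_tangential_stretching_general g hcont hconc hle hext γ hγ
end

section
/- Let G = (I⁰, I¹; F; w) be a distribution instance and 0 ≤ τ ≤ 1/2. Suppose α¹ is a refinement of the side-1 weights achieving τ-multiplicative error, and α⁰ is its proportional response. Let g* denote the power function Pow(β⁰‖β¹) of any refinement pair (β⁰, β¹) that is locally maximin on both sides and mutually proportional responses (this power function is independent of the choice of such pair). Then for every x ∈ [0,1], Pow(α⁰‖α¹)(x) ≤ min{ min{g*(0) + (1+2τ)·(g*(x) − g*(0)), 1}, g*((1/(1+2τ))·x + (1 − 1/(1+2τ))·x₁) }, where x₁ = inf{y ∈ [0,1] : g*(y)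 = 1}. -/
open Finset

variable {V : Type*} [DecidableEq V]

/-- The power function `Pow(P ‖ Q)(x)`: the maximum of `Σ t·Q` over `t : F → [0,1]`
with `Σ t·P ≤ x` (fractional knapsack). -/
noncomputable def powFn (F : Finset (V × V)) (P Q : V × V → ℝ) (x : ℝ) : ℝ :=
  sSup {v : ℝ | ∃ t : V × V → ℝ, (∀ e, 0 ≤ t e ∧ t e ≤ 1) ∧
    (∑ e ∈ F, t e * P e) ≤ x ∧ v = ∑ e ∈ F, t e * Q e}

/-!
Proportional response makes `a0` a rescaling of `a1` on the edges at each side-0 vertex, so a test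
for `Pow(a0 ‖ a1)` may be replaced by one that is constant on those edges. Such a vertex test `s`
costs the same under `a0` and `b0` (both have payloads `w`), and by the error bound its `a1`-value
is at most `1 + τ` times its `b1`-value. Comparing complements instead, its `a1`-value is at most
the `b1`-value of the vertex test `τ + (1 - τ) s`, which costs at most `τ + (1 - τ) x`, and
`1 / (1 + 2τ) ≤ 1 - τ` for `τ ≤ 1/2`. Finally `g*(0) = 0` and `x₁ = 1`, since `b1` is `b0` rescaled
by the positive densities `ρ*`.
-/

section PowerFunction

variable {α : Type*} {F : Finset (α × α)} {P Q : α × α → ℝ}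

theorem bddAbove_powFn_set (x : ℝ) :
    BddAbove {v : ℝ | ∃ t : α × α → ℝ, (∀ e, 0 ≤ t e ∧ t e ≤ 1) ∧
      (∑ e ∈ F, t e * P e) ≤ x ∧ v = ∑ e ∈ F, t e * Q e} := by
  refine ⟨∑ e ∈ F, |Q e|, ?_⟩
  rintro v ⟨t, ht, -, rfl⟩
  refine sum_le_sum fun e _ => ?_
  calc t e * Q e ≤ t e * |Q e| := mul_le_mul_of_nonneg_left (le_abs_self _) (ht e).1
    _ ≤ |Q e| := mul_le_of_le_one_left (abs_nonneg _) (ht e).2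

theorem sum_mul_le_powFn {x : ℝ} {t : α × α → ℝ} (ht : ∀ e ∈ F, 0 ≤ t e ∧ t e ≤ 1)
    (hx : ∑ e ∈ F, t e * P e ≤ x) : ∑ e ∈ F, t e * Q e ≤ powFn F P Q x := by
  classical
  set t' : α × α → ℝ := fun e => if e ∈ F then t e else 0
  have ht' : ∀ R : α × α → ℝ, ∑ e ∈ F, t' e * R e = ∑ e ∈ F, t e * R e := fun R =>
    sum_congr rfl fun e he => by simp only [t', if_pos he]
  rw [← ht']
  refine le_csSup (bddAbove_powFn_set x) ⟨t', fun e => ?_, (ht' P).trans_le hx, rfl⟩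
  by_cases he : e ∈ F
  · simpa only [t', if_pos he] using ht e he
  · simp only [t', if_neg he, le_refl, zero_le_one, and_self]

theorem powFn_le {x B : ℝ} (hx : 0 ≤ x)
    (h : ∀ t : α × α → ℝ, (∀ e, 0 ≤ t e ∧ t e ≤ 1) → ∑ e ∈ F, t e * P e ≤ x →
      ∑ e ∈ F, t e * Q e ≤ B) :
    powFn F P Q x ≤ B :=
  csSup_le ⟨0, fun _ => 0, fun _ => ⟨le_rfl, zero_le_one⟩, by simpa using hx, by simp⟩
    fun _ ⟨t, ht, htP, hv⟩ => hv ▸ h t ht htP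

theorem powFn_nonneg {x : ℝ} (hx : 0 ≤ x) : 0 ≤ powFn F P Q x := by
  simpa using sum_mul_le_powFn (F := F) (P := P) (Q := Q) (t := fun _ => 0)
    (fun _ _ => ⟨le_rfl, zero_le_one⟩) (by simpa using hx)

theorem powFn_le_sum (hQ : ∀ e ∈ F, 0 ≤ Q e) {x : ℝ} (hx : 0 ≤ x) :
    powFn F P Q x ≤ ∑ e ∈ F, Q e :=
  powFn_le hx fun _ ht _ => sum_le_sum fun e he => mul_le_of_le_one_left (hQ e he) (ht e).2

theorem powFn_zero_eq_zero {r : α × α → ℝ} (hP : ∀ e ∈ F, 0 ≤ P e)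
    (hPQ : ∀ e ∈ F, Q e = r e * P e) : powFn F P Q 0 = 0 := by
  refine le_antisymm (powFn_le le_rfl fun t ht htP => le_of_eq ?_) (powFn_nonneg le_rfl)
  have htP_nonneg : ∀ e ∈ F, 0 ≤ t e * P e := fun e he => mul_nonneg (ht e).1 (hP e he)
  have htP_zero : ∀ e ∈ F, t e * P e = 0 :=
    (sum_eq_zero_iff_of_nonneg htP_nonneg).1 (le_antisymm htP (sum_nonneg htP_nonneg))
  refine sum_eq_zero fun e he => ?_
  rw [hPQ e he, mul_left_comm, htP_zero e he, mul_zero]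

theorem powFn_le_sum_sub {m y : ℝ} (hm : 0 ≤ m) (hy : 0 ≤ y) (hPQ : ∀ e ∈ F, m * P e ≤ Q e) :
    powFn F P Q y ≤ ∑ e ∈ F, Q e - m * (∑ e ∈ F, P e - y) := by
  refine powFn_le hy fun t ht htP => ?_
  have hcompl : m * ∑ e ∈ F, (1 - t e) * P e ≤ ∑ e ∈ F, (1 - t e) * Q e := by
    rw [mul_sum]
    refine sum_le_sum fun e he => ?_
    rw [mul_left_comm]
    exact mul_le_mul_of_nonneg_left (hPQ e he) (sub_nonneg.2 (ht e).2)
  simp only [sub_mul, one_mul, sum_sub_distrib] at hcompl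
  nlinarith [mul_le_mul_of_nonneg_left htP hm]

theorem sInf_powFn_eq_one {r : α × α → ℝ} (hP : ∀ e ∈ F, 0 ≤ P e)
    (hPsum : ∑ e ∈ F, P e = 1) (hQsum : ∑ e ∈ F, Q e = 1)
    (hPQ : ∀ e ∈ F, Q e = r e * P e) (hr : ∀ e ∈ F, 0 < r e) :
    sInf {y : ℝ | y ∈ Set.Icc (0:ℝ) 1 ∧ powFn F P Q y = 1} = 1 := by
  obtain ⟨e₀, he₀, hmin⟩ :=
    F.exists_min_image r (nonempty_of_sum_ne_zero (hPsum.trans_ne one_ne_zero))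
  have hQ : ∀ e ∈ F, 0 ≤ Q e := fun e he => (hPQ e he).symm ▸ mul_nonneg (hr e he).le (hP e he)
  have hpow_one : powFn F P Q 1 = 1 := by
    refine le_antisymm ((powFn_le_sum hQ zero_le_one).trans hQsum.le) ?_
    simpa [hQsum] using sum_mul_le_powFn (F := F) (P := P) (Q := Q) (t := fun _ => 1)
      (fun _ _ => ⟨zero_le_one, le_rfl⟩) (by simp [hPsum])
  suffices {y : ℝ | y ∈ Set.Icc (0:ℝ) 1 ∧ powFn F P Q y = 1} = {1} by
    rw [this, csInf_singleton]
  ext y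
  refine ⟨fun ⟨⟨hy0, hy1⟩, hy⟩ => ?_, fun hy => ?_⟩
  · have hbound := powFn_le_sum_sub (hr e₀ he₀).le hy0 fun e he =>
      (hPQ e he).symm ▸ mul_le_mul_of_nonneg_right (hmin e he) (hP e he)
    rw [hy, hPsum, hQsum] at hbound
    exact Set.mem_singleton_iff.2 (le_antisymm hy1 (by nlinarith [hr e₀ he₀]))
  · rw [Set.mem_singleton_iff.1 hy]
    exact ⟨⟨zero_le_one, le_rfl⟩, hpow_one⟩

end PowerFunction

theorem sum_mul_le_sum_affine_mul {ι : Type*} {I : Finset ι} {p q s : ι → ℝ} {τ : ℝ}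
    (hs : ∀ i ∈ I, s i ≤ 1) (hpq : ∀ i ∈ I, (1 - τ) * q i ≤ p i)
    (hsum : ∑ i ∈ I, p i = ∑ i ∈ I, q i) :
    ∑ i ∈ I, s i * p i ≤ ∑ i ∈ I, (τ + (1 - τ) * s i) * q i := by
  have hnonneg : 0 ≤ ∑ i ∈ I, (1 - s i) * (p i - (1 - τ) * q i) :=
    sum_nonneg fun i hi => mul_nonneg (sub_nonneg.2 (hs i hi)) (sub_nonneg.2 (hpq i hi))
  have hexpand : ∀ i, (1 - s i) * (p i - (1 - τ) * q i) =
      p i - q i + ((τ + (1 - τ) * s i) * q i - s i * p i) := fun i => by ring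
  simp only [hexpand, sum_add_distrib, sum_sub_distrib, hsum, sub_self, zero_add] at hnonneg
  linarith

section Payload

variable {I0 : Finset V} {F : Finset (V × V)}

theorem payload0_congr {f g : V × V → ℝ} (h : ∀ e ∈ F, f e = g e) (i : V) :
    payload0 F f i = payload0 F g i :=
  sum_congr rfl fun e he => h e (mem_filter.1 he).1

theorem payload0_comp_fst_mul (g : V → ℝ) (h : V × V → ℝ) (i : V) :
    payload0 F (fun e => g e.1 * h e) i = g i * payload0 F h i := by
  rw [payload0, payload0, mul_sum]
  exact sum_congr rfl fun e he => by rw [(mem_filter.1 he).2]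

theorem sum_payload0 (hF : ∀ e ∈ F, e.1 ∈ I0) (h : V × V → ℝ) :
    ∑ i ∈ I0, payload0 F h i = ∑ e ∈ F, h e :=
  sum_fiberwise_of_maps_to hF h

theorem sum_comp_fst_mul (hF : ∀ e ∈ F, e.1 ∈ I0) (g : V → ℝ) (h : V × V → ℝ) :
    ∑ e ∈ F, g e.1 * h e = ∑ i ∈ I0, g i * payload0 F h i := by
  rw [← sum_payload0 hF]
  simp only [payload0_comp_fst_mul]

variable {P Q : V × V → ℝ}

theorem exists_vertex_test {k : V → ℝ} (hF : ∀ e ∈ F, e.1 ∈ I0) (hQ : ∀ e ∈ F, 0 ≤ Q e)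
    (hQpos : ∀ i ∈ I0, 0 < payload0 F Q i) (hPQ : ∀ e ∈ F, P e = k e.1 * Q e)
    {t : V × V → ℝ} (ht : ∀ e, 0 ≤ t e ∧ t e ≤ 1) :
    ∃ s : V → ℝ, (∀ i ∈ I0, 0 ≤ s i ∧ s i ≤ 1) ∧
      ∑ i ∈ I0, s i * payload0 F P i = ∑ e ∈ F, t e * P e ∧
      ∑ i ∈ I0, s i * payload0 F Q i = ∑ e ∈ F, t e * Q e := by
  set tQ : V × V → ℝ := fun e => t e * Q e
  have hsQ : ∀ i ∈ I0, payload0 F tQ i / payload0 F Q i * payload0 F Q i = payload0 F tQ i :=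
    fun i hi => div_mul_cancel₀ _ (hQpos i hi).ne'
  refine ⟨fun i => payload0 F tQ i / payload0 F Q i, fun i hi => ⟨?_, ?_⟩, ?_, ?_⟩
  · exact div_nonneg (sum_nonneg fun e he => mul_nonneg (ht e).1 (hQ e (mem_filter.1 he).1))
      (hQpos i hi).le
  · refine (div_le_one (hQpos i hi)).2 (sum_le_sum fun e he => ?_)
    exact mul_le_of_le_one_left (hQ e (mem_filter.1 he).1) (ht e).2
  · have htP : ∑ e ∈ F, t e * P e = ∑ e ∈ F, k e.1 * tQ e :=
      sum_congr rfl fun e he => by rw [hPQ e he]; ring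
    rw [htP, sum_comp_fst_mul hF]
    refine sum_congr rfl fun i hi => ?_
    rw [payload0_congr hPQ, payload0_comp_fst_mul, mul_left_comm, hsQ i hi]
  · rw [← sum_payload0 hF]
    exact sum_congr rfl hsQ

theorem sum_mul_payload0_le_powFn (hF : ∀ e ∈ F, e.1 ∈ I0) {s : V → ℝ}
    (hs : ∀ i ∈ I0, 0 ≤ s i ∧ s i ≤ 1) {x : ℝ} (hx : ∑ i ∈ I0, s i * payload0 F P i ≤ x) :
    ∑ i ∈ I0, s i * payload0 F Q i ≤ powFn F P Q x := by
  rw [← sum_comp_fst_mul hF] at hx ⊢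
  exact sum_mul_le_powFn (fun e he => hs e.1 (hF e he)) hx

theorem powFn_le_of_vertex_tests {k : V → ℝ} (hF : ∀ e ∈ F, e.1 ∈ I0)
    (hQ : ∀ e ∈ F, 0 ≤ Q e) (hQpos : ∀ i ∈ I0, 0 < payload0 F Q i)
    (hPQ : ∀ e ∈ F, P e = k e.1 * Q e) {x B : ℝ} (hx : 0 ≤ x)
    (h : ∀ s : V → ℝ, (∀ i ∈ I0, 0 ≤ s i ∧ s i ≤ 1) → ∑ i ∈ I0, s i * payload0 F P i ≤ x →
      ∑ i ∈ I0, s i * payload0 F Q i ≤ B) :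
    powFn F P Q x ≤ B := by
  refine powFn_le hx fun t ht htP => ?_
  obtain ⟨s, hs, hsP, hsQ⟩ := exists_vertex_test hF hQ hQpos hPQ ht
  exact hsQ ▸ h s hs (hsP ▸ htP)

variable {P₀ Q₀ : V × V → ℝ} {k : V → ℝ} {x : ℝ}

theorem powFn_le_mul_powFn (hF : ∀ e ∈ F, e.1 ∈ I0) (hQ₀ : ∀ e ∈ F, 0 ≤ Q₀ e)
    (hQ₀pos : ∀ i ∈ I0, 0 < payload0 F Q₀ i) (hPQ₀ : ∀ e ∈ F, P₀ e = k e.1 * Q₀ e)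
    (hP : ∀ i ∈ I0, payload0 F P₀ i = payload0 F P i) {c : ℝ} (hc : 0 ≤ c)
    (hQ₀Q : ∀ i ∈ I0, payload0 F Q₀ i ≤ c * payload0 F Q i) (hx : 0 ≤ x) :
    powFn F P₀ Q₀ x ≤ c * powFn F P Q x := by
  refine powFn_le_of_vertex_tests hF hQ₀ hQ₀pos hPQ₀ hx fun s hs hsx => ?_
  rw [sum_congr rfl fun i hi => congrArg (s i * ·) (hP i hi)] at hsx
  calc ∑ i ∈ I0, s i * payload0 F Q₀ i ≤ ∑ i ∈ I0, c * (s i * payload0 F Q i) :=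
        sum_le_sum fun i hi => by nlinarith [hQ₀Q i hi, hs i hi]
    _ ≤ c * powFn F P Q x := by
        rw [← mul_sum]
        exact mul_le_mul_of_nonneg_left (sum_mul_payload0_le_powFn hF hs hsx) hc

theorem powFn_le_powFn_affine {τ y : ℝ} (hF : ∀ e ∈ F, e.1 ∈ I0) (hQ₀ : ∀ e ∈ F, 0 ≤ Q₀ e)
    (hQ₀pos : ∀ i ∈ I0, 0 < payload0 F Q₀ i) (hPQ₀ : ∀ e ∈ F, P₀ e = k e.1 * Q₀ e)
    (hP : ∀ i ∈ I0, payload0 F P₀ i = payload0 F P i) (hPsum : ∑ e ∈ F, P e = 1)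
    (hQsum : ∑ e ∈ F, Q₀ e = ∑ e ∈ F, Q e) (hτ0 : 0 ≤ τ) (hτ1 : τ ≤ 1)
    (hQQ₀ : ∀ i ∈ I0, (1 - τ) * payload0 F Q i ≤ payload0 F Q₀ i) (hx : 0 ≤ x)
    (hy : τ + (1 - τ) * x ≤ y) :
    powFn F P₀ Q₀ x ≤ powFn F P Q y := by
  refine powFn_le_of_vertex_tests hF hQ₀ hQ₀pos hPQ₀ hx fun s hs hsx => ?_
  rw [sum_congr rfl fun i hi => congrArg (s i * ·) (hP i hi)] at hsx
  have hpayload_sum : ∑ i ∈ I0, payload0 F Q₀ i = ∑ i ∈ I0, payload0 F Q i := by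
    rw [sum_payload0 hF, sum_payload0 hF, hQsum]
  refine (sum_mul_le_sum_affine_mul (fun i hi => (hs i hi).2) hQQ₀ hpayload_sum).trans
    (sum_mul_payload0_le_powFn hF (fun i hi => ⟨?_, ?_⟩) ?_)
  · nlinarith [hs i hi]
  · nlinarith [hs i hi]
  · have hcost : ∑ i ∈ I0, (τ + (1 - τ) * s i) * payload0 F P i =
        τ + (1 - τ) * ∑ i ∈ I0, s i * payload0 F P i := by
      simp only [add_mul, sum_add_distrib, ← mul_sum, mul_assoc, sum_payload0 hF, hPsum,
        mul_one]
    rw [hcost]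
    nlinarith [mul_le_mul_of_nonneg_left hsx (sub_nonneg.2 hτ1)]

end Payload

theorem abs_payload0_sub_le_of_density0 {F : Finset (V × V)} {w : V → ℝ} {a b : V × V → ℝ}
    {i : V} {τ : ℝ} (hw : 0 < w i)
    (h : |density0 F w a i - density0 F w b i| ≤ τ * density0 F w b i) :
    |payload0 F a i - payload0 F b i| ≤ τ * payload0 F b i := by
  simp only [density0, ← sub_div, abs_div, abs_of_pos hw, ← mul_div_assoc] at h
  exact (div_le_div_iff_of_pos_right hw).1 h

namespace IsPropRespOf1

variable {F : Finset (V × V)} {w : V → ℝ} {a b : V × V → ℝ}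

theorem payload0_ne_zero (hpr : IsPropRespOf1 F w b a) {i : V} (ha : payload0 F a i ≠ 0) :
    payload0 F b i ≠ 0 := by
  contrapose! ha
  refine sum_eq_zero fun e he => ?_
  rw [mem_filter] at he
  rw [hpr.2 e he.1, he.2, ha, div_zero]

theorem eq_div_mul (hpr : IsPropRespOf1 F w b a) :
    ∀ e ∈ F, a e = w e.1 / payload0 F b e.1 * b e := fun e he => by
  rw [hpr.2 e he]
  ring

theorem eq_density0_mul (hpr : IsPropRespOf1 F w b a) {e : V × V} (he : e ∈ F)
    (hw : w e.1 ≠ 0) (hb : payload0 F b e.1 ≠ 0) : b e = density0 F w b e.1 * a e := by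
  rw [hpr.2 e he, density0]
  field_simp

end IsPropRespOf1

namespace IsDistInstance

variable {I0 I1 : Finset V} {F : Finset (V × V)} {w : V → ℝ} {a : V × V → ℝ}

theorem fst_mem (hG : IsDistInstance I0 I1 F w) {e : V × V} (he : e ∈ F) : e.1 ∈ I0 :=
  (hG.1.2.1 e he).1

theorem weight_pos (hG : IsDistInstance I0 I1 F w) {i : V} (hi : i ∈ I0) : 0 < w i :=
  hG.1.2.2 i (mem_union_left _ hi)

theorem payload0_eq (hG : IsDistInstance I0 I1 F w) (ha : IsRefinement0 I0 F w a) {i : V}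
    (hi : i ∈ I0) : payload0 F a i = w i :=
  ha.2.2 i hi (hG.2.1 i hi)

theorem payload0_pos_of_isPropRespOf1 (hG : IsDistInstance I0 I1 F w) {a₀ a₁ : V × V → ℝ}
    (ha₀ : IsRefinement0 I0 F w a₀) (ha₁ : ∀ e, 0 ≤ a₁ e) (hpr : IsPropRespOf1 F w a₁ a₀)
    {i : V} (hi : i ∈ I0) : 0 < payload0 F a₁ i :=
  (sum_nonneg fun e _ => ha₁ e).lt_of_ne' <| hpr.payload0_ne_zero <|
    (hG.payload0_eq ha₀ hi).trans_ne (hG.weight_pos hi).ne'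

theorem sum_eq_one_of_isRefinement0 (hG : IsDistInstance I0 I1 F w)
    (ha : IsRefinement0 I0 F w a) : ∑ e ∈ F, a e = 1 := by
  rw [← sum_payload0 fun e he => hG.fst_mem he, sum_congr rfl fun i hi => hG.payload0_eq ha hi]
  exact hG.2.2.2.1

theorem sum_eq_one_of_isRefinement1 (hG : IsDistInstance I0 I1 F w)
    (ha : IsRefinement1 I1 F w a) : ∑ e ∈ F, a e = 1 := by
  rw [← sum_fiberwise_of_maps_to fun e he => (hG.1.2.1 e he).2]
  exact (sum_congr rfl fun j hj => ha.2.2 j hj (hG.2.2.1 j hj)).trans hG.2.2.2.2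

end IsDistInstance

theorem approx_refinement_power_function_bound_general
    (I0 I1 : Finset V) (F : Finset (V × V)) (w : V → ℝ)
    (hG : IsDistInstance I0 I1 F w)
    (τ : ℝ) (hτ0 : 0 ≤ τ) (hτ1 : τ ≤ 1 / 2)
    (b0 b1 : V × V → ℝ)
    (hb0 : IsRefinement0 I0 F w b0) (hb1 : IsRefinement1 I1 F w b1)
    (hprb1 : IsPropRespOf1 F w b1 b0)
    (a0 a1 : V × V → ℝ)
    (ha0 : IsRefinement0 I0 F w a0) (ha1 : IsRefinement1 I1 F w a1)
    (herr : ∀ i ∈ I0, |density0 F w a1 i - density0 F w b1 i| ≤ τ * density0 F w b1 i)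
    (hpr : IsPropRespOf1 F w a1 a0) :
    ∀ x ∈ Set.Icc (0:ℝ) 1,
      powFn F a0 a1 x ≤
        min (min (powFn F b0 b1 0 + (1 + 2 * τ) * (powFn F b0 b1 x - powFn F b0 b1 0)) 1)
          (powFn F b0 b1 ((1 / (1 + 2 * τ)) * x + (1 - 1 / (1 + 2 * τ)) *
            sInf {y : ℝ | y ∈ Set.Icc (0:ℝ) 1 ∧ powFn F b0 b1 y = 1})) := by
  rintro x ⟨hx0, hx1⟩
  have hF : ∀ e ∈ F, e.1 ∈ I0 := fun e he => hG.fst_mem he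
  have ha1_pos : ∀ i ∈ I0, 0 < payload0 F a1 i := fun i hi =>
    hG.payload0_pos_of_isPropRespOf1 ha0 ha1.1 hpr hi
  have hb1_pos : ∀ i ∈ I0, 0 < payload0 F b1 i := fun i hi =>
    hG.payload0_pos_of_isPropRespOf1 hb0 hb1.1 hprb1 hi
  have hP : ∀ i ∈ I0, payload0 F a0 i = payload0 F b0 i := fun i hi =>
    (hG.payload0_eq ha0 hi).trans (hG.payload0_eq hb0 hi).symm
  have hclose : ∀ i ∈ I0, |payload0 F a1 i - payload0 F b1 i| ≤ τ * payload0 F b1 i :=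
    fun i hi => abs_payload0_sub_le_of_density0 (hG.weight_pos hi) (herr i hi)
  have hb1_eq : ∀ e ∈ F, b1 e = density0 F w b1 e.1 * b0 e := fun e he =>
    hprb1.eq_density0_mul he (hG.weight_pos (hF e he)).ne' (hb1_pos _ (hF e he)).ne'
  rw [powFn_zero_eq_zero (fun e _ => hb0.1 e) hb1_eq,
    sInf_powFn_eq_one (fun e _ => hb0.1 e) (hG.sum_eq_one_of_isRefinement0 hb0)
      (hG.sum_eq_one_of_isRefinement1 hb1) hb1_eq
      fun e he => div_pos (hb1_pos _ (hF e he)) (hG.weight_pos (hF e he))]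
  refine le_min (le_min ?_ ?_) ?_
  · have hbound := powFn_le_mul_powFn (Q := b1) (k := fun i => w i / payload0 F a1 i)
      (c := 1 + τ) hF (fun e _ => ha1.1 e) ha1_pos hpr.eq_div_mul hP (by linarith)
      (fun i hi => by linarith [abs_le.1 (hclose i hi)]) hx0
    nlinarith [mul_nonneg hτ0 (powFn_nonneg (F := F) (P := b0) (Q := b1) hx0)]
  · exact (powFn_le_sum (fun e _ => ha1.1 e) hx0).trans (hG.sum_eq_one_of_isRefinement1 ha1).le
  · have hc : 1 / (1 + 2 * τ) ≤ 1 - τ := by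
      rw [div_le_iff₀ (by linarith)]
      nlinarith
    refine powFn_le_powFn_affine (Q := b1) (k := fun i => w i / payload0 F a1 i) hF
      (fun e _ => ha1.1 e) ha1_pos hpr.eq_div_mul hP (hG.sum_eq_one_of_isRefinement0 hb0)
      (by rw [hG.sum_eq_one_of_isRefinement1 ha1, hG.sum_eq_one_of_isRefinement1 hb1]) hτ0
      (by linarith) (fun i hi => by linarith [abs_le.1 (hclose i hi)]) hx0 ?_
    nlinarith [mul_nonneg (sub_nonneg.2 hc) (sub_nonneg.2 hx1)]

/-- **Approximation to the minimal power function.**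
In a distribution instance, let `(b0, b1)` be a refinement pair that is locally maximin on
both sides and mutually proportional responses, and write `g* = Pow(b0 ‖ b1)` (this power
function is independent of the choice of such a pair).  Suppose `0 ≤ τ ≤ 1/2`, `a1` is a
refinement of the side-1 weights achieving `τ`-multiplicative error (with respect to the
side-0 density vector `ρ*` induced by the locally maximin side-1 refinement `b1`), and `a0`
is the proportional response to `a1`.  Then for every `x ∈ [0,1]`,
`Pow(a0 ‖ a1)(x) ≤ min{ min{g*(0) + (1+2τ)(g*(x) − g*(0)), 1},
 g*((1/(1+2τ))·x + (1 − 1/(1+2τ))·x₁) }`, where `x₁ = inf{y ∈ [0,1] : g*(y) = 1}`. -/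
theorem approx_refinement_power_function_bound
    (I0 I1 : Finset V) (F : Finset (V × V)) (w : V → ℝ)
    (hG : IsDistInstance I0 I1 F w)
    (τ : ℝ) (hτ0 : 0 ≤ τ) (hτ1 : τ ≤ 1 / 2)
    (b0 b1 : V × V → ℝ)
    (hb0 : IsRefinement0 I0 F w b0) (hb1 : IsRefinement1 I1 F w b1)
    (hmb0 : LocallyMaximin0 F w b0) (hmb1 : LocallyMaximin1 F w b1)
    (hprb0 : IsPropRespOf0 F w b0 b1) (hprb1 : IsPropRespOf1 F w b1 b0)
    (a0 a1 : V × V → ℝ)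
    (ha0 : IsRefinement0 I0 F w a0) (ha1 : IsRefinement1 I1 F w a1)
    (herr : ∀ i ∈ I0, |density0 F w a1 i - density0 F w b1 i| ≤ τ * density0 F w b1 i)
    (hpr : IsPropRespOf1 F w a1 a0) :
    ∀ x ∈ Set.Icc (0:ℝ) 1,
      powFn F a0 a1 x ≤
        min (min (powFn F b0 b1 0 + (1 + 2 * τ) * (powFn F b0 b1 x - powFn F b0 b1 0)) 1)
          (powFn F b0 b1 ((1 / (1 + 2 * τ)) * x + (1 - 1 / (1 + 2 * τ)) *
            sInf {y : ℝ | y ∈ Set.Icc (0:ℝ) 1 ∧ powFn F b0 b1 y = 1})) :=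
  approx_refinement_power_function_bound_general I0 I1 F w hG τ hτ0 hτ1 b0 b1 hb0 hb1 hprb1 a0 a1
    ha0 ha1 herr hpr
end

section
/- Let G = (I⁰, I¹; F; w) be an instance in which every vertex has at least one neighbor and I¹ is nonempty. Let α be a locally maximin refinement of the side-0 vertex weights, inducing the payload density vector ρ on I¹, and let S = {j ∈ I¹ : ρ(j) = max_{k∈I¹} ρ(k)}. Then S is the maximal densest subset of I¹ with ground set I¹: S is a densest subset, every densest subset of I¹ is contained in S, and the density w(F[S])/w(S) of S equals max_{k∈I¹} ρ(k). -/
open Finset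

variable {V : Type*} [DecidableEq V]

variable [Fintype V]

/-- Total weight of a vertex set. -/
noncomputable def wsum (w : V → ℝ) (S : Finset V) : ℝ := ∑ v ∈ S, w v

/-- With `I1` as ground set, the closed neighbourhood `F[S]` of `S ⊆ I1`:
side-0 vertices having at least one neighbour, all of whose neighbours lie in `S`. -/
def closedNbr1 (I0 : Finset V) (F : Finset (V × V)) (S : Finset V) : Finset V :=
  I0.filter fun i => (∃ j, (i, j) ∈ F) ∧ ∀ j, (i, j) ∈ F → j ∈ S

/-- Density `ρ(S) = w(F[S]) / w(S)` of a subset of the ground set `I1`. -/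
noncomputable def subsetDensity1 (I0 : Finset V) (F : Finset (V × V)) (w : V → ℝ)
    (S : Finset V) : ℝ :=
  wsum w (closedNbr1 I0 F S) / wsum w S

/-! Every unit of weight of a vertex in `F[T]` travels along an edge into `T`, so
`w(F[T]) ≤ ∑_{j ∈ T} p(j) ≤ M · w(T)` with `M` the maximal payload density. For the top level
set `S = {ρ = M}` both inequalities are equalities: by local maximinality, a vertex sending
positive weight into `S` has all its neighbours of density at least `M`, hence in `S`. For
an arbitrary `T` equality in the second inequality forces `ρ = M` on `T`, i.e. `T ⊆ S`. -/

omit [Fintype V] in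
lemma sum_payload0_eq_sum_filter (F : Finset (V × V)) (a : V × V → ℝ) (A : Finset V) :
    ∑ i ∈ A, payload0 F a i = ∑ e ∈ F.filter fun e => e.1 ∈ A, a e := by
  simp only [payload0, sum_filter]
  rw [sum_comm]
  exact sum_congr rfl fun e _ => sum_ite_eq A e.1 fun _ => a e

omit [Fintype V] in
lemma sum_payload1_eq_sum_filter (F : Finset (V × V)) (a : V × V → ℝ) (A : Finset V) :
    ∑ j ∈ A, payload1 F a j = ∑ e ∈ F.filter fun e => e.2 ∈ A, a e := by
  simp only [payload1, sum_filter]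
  rw [sum_comm]
  exact sum_congr rfl fun e _ => sum_ite_eq A e.2 fun _ => a e

section

variable {I0 I1 : Finset V} {F : Finset (V × V)} {w : V → ℝ} {a : V × V → ℝ} {M : ℝ}

lemma mem_of_mem_closedNbr1 {T : Finset V} {e : V × V} (he : e ∈ F)
    (h : e.1 ∈ closedNbr1 I0 F T) : e.2 ∈ T :=
  (mem_filter.mp h).2.2 e.2 he

lemma wsum_closedNbr1_eq_sum_filter (ha : IsRefinement0 I0 F w a) (T : Finset V) :
    wsum w (closedNbr1 I0 F T) = ∑ e ∈ F.filter fun e => e.1 ∈ closedNbr1 I0 F T, a e := by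
  rw [← sum_payload0_eq_sum_filter]
  refine sum_congr rfl fun i hi => ?_
  obtain ⟨hi0, hnb, -⟩ := mem_filter.mp hi
  exact (ha.2.2 i hi0 hnb).symm

lemma wsum_closedNbr1_le_sum_payload1 (ha : IsRefinement0 I0 F w a) (T : Finset V) :
    wsum w (closedNbr1 I0 F T) ≤ ∑ j ∈ T, payload1 F a j := by
  rw [wsum_closedNbr1_eq_sum_filter ha, sum_payload1_eq_sum_filter]
  refine sum_le_sum_of_subset_of_nonneg (fun e he => ?_) fun e _ _ => ha.1 e
  obtain ⟨heF, he1⟩ := mem_filter.mp he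
  exact mem_filter.mpr ⟨heF, mem_of_mem_closedNbr1 heF he1⟩

lemma fst_mem_closedNbr1_of_pos (hF : ∀ e ∈ F, e.1 ∈ I0 ∧ e.2 ∈ I1)
    (hm : LocallyMaximin0 F w a) (hM : ∀ j ∈ I1, density1 F w a j ≤ M)
    {e : V × V} (he : e ∈ F) (hpos : 0 < a e)
    (he2 : e.2 ∈ I1.filter fun j => density1 F w a j = M) :
    e.1 ∈ closedNbr1 I0 F (I1.filter fun j => density1 F w a j = M) := by
  refine mem_filter.mpr ⟨(hF e he).1, ⟨e.2, he⟩, fun k hk => ?_⟩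
  have hk1 : k ∈ I1 := (hF _ hk).2
  have hMk : M ≤ density1 F w a k := (mem_filter.mp he2).2 ▸ hm e he hpos k hk
  exact mem_filter.mpr ⟨hk1, le_antisymm (hM k hk1) hMk⟩

lemma wsum_closedNbr1_topLevel_eq_sum_payload1 (hF : ∀ e ∈ F, e.1 ∈ I0 ∧ e.2 ∈ I1)
    (ha : IsRefinement0 I0 F w a) (hm : LocallyMaximin0 F w a)
    (hM : ∀ j ∈ I1, density1 F w a j ≤ M) :
    wsum w (closedNbr1 I0 F (I1.filter fun j => density1 F w a j = M)) =
      ∑ j ∈ I1.filter (fun j => density1 F w a j = M), payload1 F a j := by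
  rw [wsum_closedNbr1_eq_sum_filter ha, sum_payload1_eq_sum_filter]
  refine sum_subset (fun e he => ?_) fun e he hne => ?_
  · obtain ⟨heF, he1⟩ := mem_filter.mp he
    exact mem_filter.mpr ⟨heF, mem_of_mem_closedNbr1 heF he1⟩
  · obtain ⟨heF, he2⟩ := mem_filter.mp he
    by_contra hne0
    have hpos : 0 < a e := lt_of_le_of_ne (ha.1 e) (Ne.symm hne0)
    exact hne (mem_filter.mpr ⟨heF, fst_mem_closedNbr1_of_pos hF hm hM heF hpos he2⟩)

section

variable {T : Finset V} (hw : ∀ j ∈ T, 0 < w j) (hM : ∀ j ∈ T, density1 F w a j ≤ M)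
include hw hM

omit [Fintype V] in
lemma sum_payload1_le_mul_wsum : ∑ j ∈ T, payload1 F a j ≤ M * wsum w T := by
  rw [wsum, mul_sum]
  exact sum_le_sum fun j hj => (div_mul_cancel₀ _ (hw j hj).ne').ge.trans
    (mul_le_mul_of_nonneg_right (hM j hj) (hw j hj).le)

omit [Fintype V] in
lemma sum_payload1_eq_mul_wsum_iff :
    ∑ j ∈ T, payload1 F a j = M * wsum w T ↔ ∀ j ∈ T, density1 F w a j = M := by
  have hpay : ∀ j ∈ T, payload1 F a j = density1 F w a j * w j := fun j hj =>
    (div_mul_cancel₀ _ (hw j hj).ne').symm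
  rw [sum_congr rfl hpay, wsum, mul_sum,
    sum_eq_sum_iff_of_le fun j hj => mul_le_mul_of_nonneg_right (hM j hj) (hw j hj).le]
  exact forall₂_congr fun j hj => mul_left_inj' (hw j hj).ne'

lemma wsum_closedNbr1_le_mul_wsum (ha : IsRefinement0 I0 F w a) :
    wsum w (closedNbr1 I0 F T) ≤ M * wsum w T :=
  (wsum_closedNbr1_le_sum_payload1 ha T).trans (sum_payload1_le_mul_wsum hw hM)

lemma density1_eq_of_wsum_closedNbr1_eq (ha : IsRefinement0 I0 F w a)
    (h : wsum w (closedNbr1 I0 F T) = M * wsum w T) : ∀ j ∈ T, density1 F w a j = M :=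
  (sum_payload1_eq_mul_wsum_iff hw hM).mp <|
    (sum_payload1_le_mul_wsum hw hM).antisymm (h ▸ wsum_closedNbr1_le_sum_payload1 ha T)

end

end

theorem maximin_recovers_maximal_densest_subset_general
    (I0 I1 : Finset V) (F : Finset (V × V)) (w : V → ℝ)
    (hG : IsInstance I0 I1 F w)
    (hI1 : I1.Nonempty)
    (a : V × V → ℝ)
    (ha : IsRefinement0 I0 F w a) (hm : LocallyMaximin0 F w a) :
    subsetDensity1 I0 F w (I1.filter fun j =>
        density1 F w a j = I1.sup' hI1 (density1 F w a)) =
      I1.sup' hI1 (density1 F w a) ∧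
    (∀ T ⊆ I1, T.Nonempty →
      subsetDensity1 I0 F w T ≤
        subsetDensity1 I0 F w (I1.filter fun j =>
          density1 F w a j = I1.sup' hI1 (density1 F w a))) ∧
    (∀ T ⊆ I1, T.Nonempty →
      subsetDensity1 I0 F w T =
        subsetDensity1 I0 F w (I1.filter fun j =>
          density1 F w a j = I1.sup' hI1 (density1 F w a)) →
      T ⊆ I1.filter fun j => density1 F w a j = I1.sup' hI1 (density1 F w a)) := by
  obtain ⟨-, hF, hw⟩ := hG
  set M := I1.sup' hI1 (density1 F w a)
  set S := I1.filter fun j => density1 F w a j = M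
  have hM : ∀ j ∈ I1, density1 F w a j ≤ M := fun j hj => le_sup' _ hj
  have hMT : ∀ T ⊆ I1, ∀ j ∈ T, density1 F w a j ≤ M := fun T hT j hj => hM j (hT hj)
  have hwT : ∀ T ⊆ I1, ∀ j ∈ T, 0 < w j := fun T hT j hj =>
    hw j (mem_union_right _ (hT hj))
  have hwsum : ∀ T ⊆ I1, T.Nonempty → 0 < wsum w T := fun T hT hT0 =>
    sum_pos (hwT T hT) hT0
  have hSS : S ⊆ I1 := filter_subset _ _
  have hS0 : S.Nonempty := by
    obtain ⟨j, hj, hjM⟩ := exists_mem_eq_sup' hI1 (density1 F w a)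
    exact ⟨j, mem_filter.mpr ⟨hj, hjM.symm⟩⟩
  have hdensS : subsetDensity1 I0 F w S = M := by
    rw [subsetDensity1, div_eq_iff (hwsum S hSS hS0).ne',
      wsum_closedNbr1_topLevel_eq_sum_payload1 hF ha hm hM,
      sum_payload1_eq_mul_wsum_iff (hwT S hSS) (hMT S hSS)]
    exact fun j hj => (mem_filter.mp hj).2
  refine ⟨hdensS, fun T hT hT0 => ?_, fun T hT hT0 hdens => ?_⟩
  · rw [hdensS, subsetDensity1, div_le_iff₀ (hwsum T hT hT0)]
    exact wsum_closedNbr1_le_mul_wsum (hwT T hT) (hMT T hT) ha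
  · rw [hdensS, subsetDensity1, div_eq_iff (hwsum T hT hT0).ne'] at hdens
    exact fun j hj => mem_filter.mpr
      ⟨hT hj, density1_eq_of_wsum_closedNbr1_eq (hwT T hT) (hMT T hT) ha hdens j hj⟩

/-- **The maximin condition recovers the maximal densest subset.**
Suppose every vertex has at least one neighbour, `I1` is nonempty, and `a` is a locally
maximin refinement of the side-0 weights inducing payload densities `ρ` on `I1`.  Then
`S = {j ∈ I1 : ρ(j) = max_k ρ(k)}` is the maximal densest subset of `I1`: its density
equals `max_k ρ(k)`, it is densest, and every densest subset is contained in it. -/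
theorem maximin_recovers_maximal_densest_subset
    (I0 I1 : Finset V) (F : Finset (V × V)) (w : V → ℝ)
    (hG : IsInstance I0 I1 F w)
    (hnb0 : ∀ i ∈ I0, ∃ j, (i, j) ∈ F) (hnb1 : ∀ j ∈ I1, ∃ i, (i, j) ∈ F)
    (hI1 : I1.Nonempty)
    (a : V × V → ℝ)
    (ha : IsRefinement0 I0 F w a) (hm : LocallyMaximin0 F w a) :
    subsetDensity1 I0 F w (I1.filter fun j =>
        density1 F w a j = I1.sup' hI1 (density1 F w a)) =
      I1.sup' hI1 (density1 F w a) ∧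
    (∀ T ⊆ I1, T.Nonempty →
      subsetDensity1 I0 F w T ≤
        subsetDensity1 I0 F w (I1.filter fun j =>
          density1 F w a j = I1.sup' hI1 (density1 F w a))) ∧
    (∀ T ⊆ I1, T.Nonempty →
      subsetDensity1 I0 F w T =
        subsetDensity1 I0 F w (I1.filter fun j =>
          density1 F w a j = I1.sup' hI1 (density1 F w a)) →
      T ⊆ I1.filter fun j => density1 F w a j = I1.sup' hI1 (density1 F w a)) :=
  maximin_recovers_maximal_densest_subset_general I0 I1 F w hG hI1 a ha hm
end
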